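/- arXiv:1409.3868 — 9 statements merged into one kernel-verified Lean document; each statement's English description precedes it below -/
import Mathlib

section
/- For every z ∈ ℂ, the n×n matrix 𝒬(z) with entries 𝒬(z)_{ij} := Q^{(j)}_i(z) satisfies rank 𝒬(z) = n − dim ker(𝒜 − zI). In particular, the spectrum of 𝒜 is exactly the set of zeros of det 𝒬(z). -/
open Polynomial Matrix

/-- The height of an `n`-dimensional vector polynomial. -/
noncomputable def vheight (n : ℕ) (r : Fin n → Polynomial ℂ) : WithBot ℕ :=
  Finset.univ.sup fun j : Fin n => n • (r j).degree + ((j : ℕ) : WithBot ℕ)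

/-- The class `𝓜(n,N)` of band symmetric matrices with degeneration indices `m`. -/
structure MatrixClassM (n N : ℕ) (A : Matrix (Fin N) (Fin N) ℝ) (m : ℕ → ℕ) : Prop where
  symm : A.IsSymm
  band : ∀ k l : Fin N, (n : ℤ) < |(k : ℤ) - (l : ℤ)| → A k l = 0
  m_zero : m 0 = 0
  m_last : m n = N
  m_mono : ∀ j < n, m j < m (j + 1)
  m_one : 1 < m 1
  m_le : ∀ j, 1 ≤ j → j ≤ n → m j ≤ N - n + j
  d_pos : ∀ j < n, ∀ k l : Fin N, (l : ℕ) = (k : ℕ) + (n - j) →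
      m j < (k : ℕ) + 1 → (k : ℕ) + 1 < m (j + 1) → 0 < A l k
  d_zero : ∀ j < n, ∀ k l : Fin N, (l : ℕ) = (k : ℕ) + (n - j) →
      m (j + 1) ≤ (k : ℕ) + 1 → (k : ℕ) + 1 ≤ N - n + j → A l k = 0

/-- The rank-one jump matrix `σ_k`. -/
def sigmaJump {n N : ℕ} (αc : Fin N → Fin n → ℂ) (k : Fin N) :
    Matrix (Fin n) (Fin n) ℂ :=
  Matrix.of fun i j => (starRingEnd ℂ) (αc k i) * αc k j

/-- The inner product `⟨r,s⟩_{L²(σ)}` for vector polynomials. -/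
noncomputable def L2inner {n N : ℕ} (x : Fin N → ℝ)
    (σ : Fin N → Matrix (Fin n) (Fin n) ℂ) (r s : Fin n → Polynomial ℂ) : ℂ :=
  ∑ k, ∑ i, ∑ j,
    (starRingEnd ℂ) ((r i).eval ((x k : ℂ))) * σ k i j * (s j).eval ((x k : ℂ))

/-- The interpolation set `𝕊`. -/
def interpSet {n N : ℕ} (z : Fin N → ℂ) (α : Fin N → Fin n → ℂ) :
    Set (Fin n → Polynomial ℂ) :=
  {r | ∀ k, ∑ j, α k j * (r j).eval (z k) = 0}

/-- `𝕄(r_1) + ⋯ + 𝕄(r_m)`. -/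
def polySpan {n m : ℕ} (r : Fin m → Fin n → Polynomial ℂ) :
    Set (Fin n → Polynomial ℂ) :=
  {s | ∃ c : Fin m → Polynomial ℂ, s = fun jj => ∑ i, c i * r i jj}

/-- `𝕄(r_1) + ⋯ + 𝕄(r_{j-1})`. -/
def prevSpan {n : ℕ} (r : Fin n → Fin n → Polynomial ℂ) (j : Fin n) :
    Set (Fin n → Polynomial ℂ) :=
  {s | ∃ c : Fin n → Polynomial ℂ,
      s = fun jj => ∑ i ∈ Finset.univ.filter (fun i => i < j), c i * r i jj}

/-- `r` is a sequence of generators of `S`. -/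
def IsGenSeq {n : ℕ} (S : Set (Fin n → Polynomial ℂ))
    (r : Fin n → Fin n → Polynomial ℂ) : Prop :=
  ∀ j : Fin n, r j ≠ 0 ∧ r j ∈ S \ prevSpan r j ∧
    ∀ s ∈ S \ prevSpan r j, s ≠ 0 → vheight n (r j) ≤ vheight n s

lemma MatrixClassM.mono {n N : ℕ} {A : Matrix (Fin N) (Fin N) ℝ} {m : ℕ → ℕ}
    (hA : MatrixClassM n N A m) : ∀ a b : ℕ, a ≤ b → b ≤ n → m a ≤ m b := by
  intro a b hab hbn
  induction b with
  | zero => rw [Nat.le_zero.mp hab]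
  | succ b ih =>
    rcases Nat.lt_or_ge a (b + 1) with h | h
    · exact (ih (by omega) (by omega)).trans (le_of_lt (hA.m_mono b (by omega)))
    · have : a = b + 1 := by omega
      rw [this]

lemma uniq_aux (n N : ℕ) (hn : 0 < n) (hnN : n < N)
    (A : Matrix (Fin N) (Fin N) ℝ) (m : ℕ → ℕ) (hA : MatrixClassM n N A m)
    (z : ℂ) (w : Fin N → ℂ)
    (h0 : ∀ i : Fin N, (i : ℕ) < n → w i = 0)
    (hrec : ∀ k : Fin N, (∀ i, 1 ≤ i → i ≤ n → m i ≠ (k : ℕ) + 1) →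
      ∑ l, ((A k l : ℝ) : ℂ) * w l = z * w k) : w = 0 := by
  suffices H : ∀ t : ℕ, ∀ it : Fin N, (it : ℕ) = t → w it = 0 by
    funext i; exact H (i : ℕ) i rfl
  intro t
  induction t using Nat.strong_induction_on with
  | _ t IH =>
    intro it hit
    by_cases hlt : t < n
    · exact h0 it (by omega)
    push_neg at hlt
    have htN : t < N := by omega
    -- find the degeneration interval
    have hex : ∃ j : ℕ, t + 1 ≤ m (j + 1) + (n - (j + 1)) := by
      refine ⟨n - 1, ?_⟩
      have : n - 1 + 1 = n := by omega
      rw [this, hA.m_last]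
      omega
    classical
    set j := Nat.find hex with hj_def
    have hPj : t + 1 ≤ m (j + 1) + (n - (j + 1)) := Nat.find_spec hex
    have hjn : j < n := by
      have : j ≤ n - 1 := Nat.find_min' hex (by
        have : n - 1 + 1 = n := by omega
        rw [this, hA.m_last]; omega)
      omega
    have hlow : m j + (n - j) ≤ t := by
      rcases Nat.eq_zero_or_pos j with h0j | h0j
      · rw [h0j, hA.m_zero]; omega
      · have := Nat.find_min hex (show j - 1 < j by omega)
        have hj1 : j - 1 + 1 = j := by omega
        rw [hj1] at this
        omega
    set k0 := t - (n - j) with hk0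
    have hk0t : k0 + (n - j) = t := by omega
    have hk0lt : k0 < t := by omega
    have hmjk : m j < k0 + 1 := by omega
    have hkmj : k0 + 1 < m (j + 1) := by omega
    set k : Fin N := ⟨k0, by omega⟩ with hk
    set tt : Fin N := ⟨t, htN⟩ with htt
    have hgood : ∀ i, 1 ≤ i → i ≤ n → m i ≠ (k : ℕ) + 1 := by
      intro i h1i hin hmi
      rcases le_or_gt i j with h | h
      · have := hA.mono i j h (by omega)
        simp only [hk] at hmi
        omega
      · have := hA.mono (j + 1) i h (by omega)
        simp only [hk] at hmi
        omega
    have heq := hrec k hgood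
    have hwk : w k = 0 := IH k0 hk0lt k rfl
    have hterm : ∀ l : Fin N, l ∈ Finset.univ → l ≠ tt → ((A k l : ℝ) : ℂ) * w l = 0 := by
      intro l _ hl
      rcases lt_trichotomy (l : ℕ) t with h | h | h
      · rw [IH (l : ℕ) h l rfl, mul_zero]
      · exact absurd (Fin.ext h) hl
      · have hAz : A k l = 0 := by
          rcases Nat.lt_or_ge (k0 + n) (l : ℕ) with hb | hb
          · apply hA.band
            rw [abs_sub_comm, abs_of_nonneg (by push_cast [hk]; omega)]
            push_cast [hk]; omega
          · -- k0 + (n - j) = t < l ≤ k0 + n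
            set j' := k0 + n - (l : ℕ) with hj'
            have hj'j : j' < j := by omega
            have hlval : (l : ℕ) = (k : ℕ) + (n - j') := by simp only [hk]; omega
            have h1 : m (j' + 1) ≤ (k : ℕ) + 1 := by
              have := hA.mono (j' + 1) j (by omega) (by omega)
              simp only [hk]; omega
            have h2 : (k : ℕ) + 1 ≤ N - n + j' := by
              have : (l : ℕ) < N := l.isLt
              simp only [hk]; omega
            have := hA.d_zero j' (by omega) k l hlval h1 h2
            rw [← hA.symm.apply]
            exact this
        rw [hAz]
        push_cast
        rw [zero_mul]
    rw [Finset.sum_eq_single_of_mem tt (Finset.mem_univ tt) hterm] at heq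
    have hApos : 0 < A tt k := by
      apply hA.d_pos j hjn k tt
      · simp only [hk, htt]; omega
      · exact hmjk
      · exact hkmj
    have hAkt : A k tt = A tt k := hA.symm.apply tt k
    rw [hwk, mul_zero, hAkt] at heq
    have : ((A tt k : ℝ) : ℂ) ≠ 0 := by
      simp only [ne_eq, Complex.ofReal_eq_zero]
      exact ne_of_gt hApos
    have hwtt : w tt = 0 := by
      rcases mul_eq_zero.mp heq with h | h
      · exact absurd h this
      · exact h
    have : it = tt := Fin.ext (by simp [htt, hit])
    rw [this]; exact hwtt

lemma det_ne_zero_iff_ker_finrank (p : ℕ) (B : Matrix (Fin p) (Fin p) ℂ) :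
    B.det ≠ 0 ↔ Module.finrank ℂ (LinearMap.ker B.mulVecLin) = 0 := by
  rw [← isUnit_iff_ne_zero, ← Matrix.isUnit_iff_isUnit_det,
    ← Matrix.mulVec_injective_iff_isUnit, ← Matrix.coe_mulVecLin,
    ← LinearMap.ker_eq_bot, Submodule.finrank_eq_zero]

theorem stmt0
    (n N : ℕ) (hn : 0 < n) (hnN : n < N)
    (A : Matrix (Fin N) (Fin N) ℝ) (m : ℕ → ℕ)
    (hA : MatrixClassM n N A m)
    (T : Matrix (Fin n) (Fin n) ℝ)
    (hT_upper : ∀ i j : Fin n, j < i → T i j = 0)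
    (hT_diag : ∀ j : Fin n, T j j ≠ 0)
    (φ : Fin n → Fin N → Polynomial ℂ)
    (hφ_init : ∀ (j : Fin n) (i : Fin n),
      φ j (Fin.castLE (le_of_lt hnN) i) = C ((T j i : ℂ)))
    (hφ_rec : ∀ (j : Fin n) (k : Fin N),
      (∀ i, 1 ≤ i → i ≤ n → m i ≠ (k : ℕ) + 1) →
      ∑ l, C ((A k l : ℂ)) * φ j l = X * φ j k)
    (Q : Fin n → Fin n → Polynomial ℂ)
    (hQ : ∀ (j i : Fin n) (k : Fin N), (k : ℕ) + 1 = m ((i : ℕ) + 1) →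
      Q j i = X * φ j k - ∑ l, C ((A k l : ℂ)) * φ j l)
    :
    (∀ z : ℂ,
      (Matrix.of fun i j : Fin n => (Q j i).eval z).rank
        = n - Module.finrank ℂ
            (LinearMap.ker
              (Matrix.mulVecLin
                (A.map (fun a => (a : ℂ)) - z • (1 : Matrix (Fin N) (Fin N) ℂ))))) ∧
    (∀ z : ℂ,
      z ∈ spectrum ℂ (A.map (fun a => (a : ℂ))) ↔
        (Matrix.of fun i j : Fin n => (Q j i).eval z).det = 0) := by
  classical
  -- T transpose complex matrix is invertible
  set TC : Matrix (Fin n) (Fin n) ℂ := (T.map (fun a => (a : ℂ)))ᵀ with hTC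
  have hdetT : T.det = ∏ j, T j j :=
    Matrix.det_of_upperTriangular (by intro i j hij; exact hT_upper i j hij)
  have hdetTC : TC.det ≠ 0 := by
    rw [Matrix.det_transpose]
    have : (T.map fun a => (a : ℂ)).det = ((T.det : ℝ) : ℂ) :=
      (RingHom.map_det Complex.ofRealHom T).symm
    rw [this, hdetT]
    simp only [ne_eq, Complex.ofReal_eq_zero]
    exact Finset.prod_ne_zero_iff.mpr (fun j _ => hT_diag j)
  have hTCunit : IsUnit TC := (Matrix.isUnit_iff_isUnit_det TC).mpr (isUnit_iff_ne_zero.mpr hdetTC)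
  have hTCinj : Function.Injective TC.mulVec := Matrix.mulVec_injective_iff_isUnit.mpr hTCunit
  have key : ∀ z : ℂ,
      Module.finrank ℂ (LinearMap.ker
        (Matrix.mulVecLin (Matrix.of fun i j : Fin n => (Q j i).eval z)))
        = Module.finrank ℂ (LinearMap.ker
            (Matrix.mulVecLin
              (A.map (fun a => (a : ℂ)) - z • (1 : Matrix (Fin N) (Fin N) ℂ)))) := by
    intro z
    -- Φ matrix
    set Φ : Matrix (Fin N) (Fin n) ℂ := Matrix.of (fun k jj => (φ jj k).eval z) with hΦ
    have hΦfirst : ∀ (c : Fin n → ℂ) (i : Fin n),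
        Φ.mulVec c (Fin.castLE (le_of_lt hnN) i) = TC.mulVec c i := by
      intro c i
      simp only [Matrix.mulVec, dotProduct, hΦ, Matrix.of_apply, hTC, Matrix.transpose_apply,
        Matrix.map_apply]
      exact Finset.sum_congr rfl fun j _ => by rw [hφ_init j i, eval_C]
    -- the matrices M and 𝒬
    set M : Matrix (Fin N) (Fin N) ℂ :=
      A.map (fun a => (a : ℂ)) - z • (1 : Matrix (Fin N) (Fin N) ℂ) with hM
    set Qz : Matrix (Fin n) (Fin n) ℂ := Matrix.of (fun i jj : Fin n => (Q jj i).eval z) with hQz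
    have hMrow : ∀ (v : Fin N → ℂ) (k : Fin N),
        M.mulVec v k = (∑ l, ((A k l : ℝ) : ℂ) * v l) - z * v k := by
      intro v k
      simp only [hM, Matrix.mulVec, dotProduct, Matrix.sub_apply, Matrix.smul_apply,
        Matrix.one_apply, smul_eq_mul, mul_ite, mul_one, mul_zero, sub_mul, ite_mul, zero_mul,
        Finset.sum_sub_distrib, Finset.sum_ite_eq, Finset.mem_univ, if_true, Matrix.map_apply]
    have hkey : ∀ (c : Fin n → ℂ) (k : Fin N),
        M.mulVec (Φ.mulVec c) k
          = ∑ jj, c jj * ((∑ l, C ((A k l : ℂ)) * φ jj l) - X * φ jj k).eval z := by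
      intro c k
      rw [hMrow]
      simp only [Matrix.mulVec, dotProduct, hΦ, Matrix.of_apply, eval_sub, eval_mul, eval_X,
        eval_finset_sum, eval_C, Finset.mul_sum, mul_sub]
      rw [Finset.sum_comm]
      rw [← Finset.sum_sub_distrib]
      refine Finset.sum_congr rfl fun jj _ => ?_
      congr 1
      · exact Finset.sum_congr rfl fun l _ => by ring
      · ring
    have hgoodzero : ∀ (c : Fin n → ℂ) (k : Fin N),
        (∀ i, 1 ≤ i → i ≤ n → m i ≠ (k : ℕ) + 1) → M.mulVec (Φ.mulVec c) k = 0 := by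
      intro c k hk
      rw [hkey]
      apply Finset.sum_eq_zero
      intro jj _
      rw [hφ_rec jj k hk, sub_self, eval_zero, mul_zero]
    have hQzrow : ∀ (c : Fin n → ℂ) (i : Fin n),
        Qz.mulVec c i = ∑ jj, (Q jj i).eval z * c jj := by
      intro c i
      simp [hQz, Matrix.mulVec, dotProduct]
    have hbadr : ∀ (c : Fin n → ℂ) (i : Fin n) (k : Fin N), (k : ℕ) + 1 = m ((i : ℕ) + 1) →
        M.mulVec (Φ.mulVec c) k = -(Qz.mulVec c i) := by
      intro c i k hk
      rw [hkey, hQzrow, ← Finset.sum_neg_distrib]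
      refine Finset.sum_congr rfl fun jj _ => ?_
      have hQ' : (∑ l, C ((A k l : ℂ)) * φ jj l) - X * φ jj k = -(Q jj i) := by
        rw [hQ jj i k hk]; ring
      rw [hQ', eval_neg]; ring
    have hker : ∀ c : Fin n → ℂ, Qz.mulVec c = 0 → M.mulVec (Φ.mulVec c) = 0 := by
      intro c hc
      funext k
      by_cases hk : ∀ i, 1 ≤ i → i ≤ n → m i ≠ (k : ℕ) + 1
      · rw [hgoodzero c k hk]; rfl
      · push_neg at hk
        obtain ⟨i, h1, h2, h3⟩ := hk
        have hi : i - 1 < n := by omega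
        have hiv : (⟨i - 1, hi⟩ : Fin n) = (⟨i - 1, hi⟩ : Fin n) := rfl
        have hk' : (k : ℕ) + 1 = m (((⟨i - 1, hi⟩ : Fin n) : ℕ) + 1) := by
          simp only []
          have : (i - 1) + 1 = i := by omega
          rw [this]; omega
        rw [hbadr c ⟨i - 1, hi⟩ k hk', hc]
        simp
    have hΦinj : ∀ c1 c2 : Fin n → ℂ, Φ.mulVec c1 = Φ.mulVec c2 → c1 = c2 := by
      intro c1 c2 h
      apply hTCinj
      funext i
      rw [← hΦfirst c1 i, ← hΦfirst c2 i, h]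
    have hsurj : ∀ u : Fin N → ℂ, M.mulVec u = 0 → ∃ c, Qz.mulVec c = 0 ∧ Φ.mulVec c = u := by
      intro u hu
      obtain ⟨c, hc⟩ : ∃ c, TC.mulVec c = fun i : Fin n => u (Fin.castLE (le_of_lt hnN) i) := by
        obtain ⟨B, hB⟩ := hTCunit.exists_right_inv
        exact ⟨B.mulVec _, by rw [Matrix.mulVec_mulVec, hB, Matrix.one_mulVec]⟩
      have hw : u - Φ.mulVec c = 0 := by
        apply uniq_aux n N hn hnN A m hA z
        · intro i hi
          have hii : i = Fin.castLE (le_of_lt hnN) ⟨(i : ℕ), hi⟩ := Fin.ext rfl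
          rw [Pi.sub_apply, hii, hΦfirst, hc]
          exact sub_self _
        · intro k hk
          have h1 : M.mulVec (u - Φ.mulVec c) k = 0 := by
            rw [Matrix.mulVec_sub, Pi.sub_apply, hu, Pi.zero_apply, zero_sub,
              hgoodzero c k hk, neg_zero]
          rw [hMrow] at h1
          exact sub_eq_zero.mp h1
      have huc : Φ.mulVec c = u := by
        have := sub_eq_zero.mp hw
        exact this.symm
      refine ⟨c, ?_, huc⟩
      funext i
      have hmiN : m ((i : ℕ) + 1) ≤ N := by
        rw [← hA.m_last]; exact hA.mono _ n (by omega) le_rfl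
      have hmi1 : 1 ≤ m ((i : ℕ) + 1) :=
        le_trans (by have := hA.m_one; omega) (hA.mono 1 ((i : ℕ) + 1) (by omega) (by omega))
      have hkN : m ((i : ℕ) + 1) - 1 < N := by omega
      have hk : ((⟨m ((i : ℕ) + 1) - 1, hkN⟩ : Fin N) : ℕ) + 1 = m ((i : ℕ) + 1) := by
        simp only []; omega
      have hb := hbadr c i ⟨m ((i : ℕ) + 1) - 1, hkN⟩ hk
      rw [huc, hu, Pi.zero_apply] at hb
      have := neg_eq_zero.mp hb.symm
      rw [this]; rfl
    -- the linear equivalence between kernels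
    have hmem : ∀ c ∈ LinearMap.ker Qz.mulVecLin, Φ.mulVecLin c ∈ LinearMap.ker M.mulVecLin := by
      intro c hc
      rw [LinearMap.mem_ker] at hc ⊢
      rw [Matrix.mulVecLin_apply] at hc ⊢
      rw [Matrix.mulVecLin_apply]
      exact hker c hc
    have hfr : Module.finrank ℂ (LinearMap.ker Qz.mulVecLin)
        = Module.finrank ℂ (LinearMap.ker M.mulVecLin) := by
      have hbij : Function.Bijective (Φ.mulVecLin.restrict hmem) := by
        constructor
        · intro c1 c2 h
          apply Subtype.ext
          apply hΦinj
          have h' := congrArg Subtype.val h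
          simpa [LinearMap.restrict_apply, Matrix.mulVecLin_apply] using h'
        · rintro ⟨u, hu⟩
          rw [LinearMap.mem_ker, Matrix.mulVecLin_apply] at hu
          obtain ⟨c, hc1, hc2⟩ := hsurj u hu
          refine ⟨⟨c, ?_⟩, ?_⟩
          · rw [LinearMap.mem_ker, Matrix.mulVecLin_apply]; exact hc1
          · apply Subtype.ext
            simpa [LinearMap.restrict_apply, Matrix.mulVecLin_apply] using hc2
      exact LinearEquiv.finrank_eq (LinearEquiv.ofBijective _ hbij)
    exact hfr
  refine ⟨?_, ?_⟩
  · intro z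
    have hrn := LinearMap.finrank_range_add_finrank_ker
      (Matrix.mulVecLin (Matrix.of fun i j : Fin n => (Q j i).eval z))
    have hrk : (Matrix.of fun i j : Fin n => (Q j i).eval z).rank
        = Module.finrank ℂ (LinearMap.range
            (Matrix.mulVecLin (Matrix.of fun i j : Fin n => (Q j i).eval z))) := rfl
    have hnfr : Module.finrank ℂ (Fin n → ℂ) = n := by simp
    rw [hnfr] at hrn
    rw [hrk, ← key z]
    omega
  · intro z
    rw [spectrum.mem_iff]
    have h1 : algebraMap ℂ (Matrix (Fin N) (Fin N) ℂ) z - A.map (fun a => (a : ℂ))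
        = -(A.map (fun a => (a : ℂ)) - z • (1 : Matrix (Fin N) (Fin N) ℂ)) := by
      rw [Algebra.algebraMap_eq_smul_one, neg_sub]
    rw [h1, IsUnit.neg_iff]
    constructor
    · intro h
      by_contra hd
      apply h
      have h2 := (det_ne_zero_iff_ker_finrank n _).mp hd
      rw [key z] at h2
      have h3 := (det_ne_zero_iff_ker_finrank N _).mpr h2
      exact (Matrix.isUnit_iff_isUnit_det _).mpr (isUnit_iff_ne_zero.mpr h3)
    · intro hd hu
      have hdM := isUnit_iff_ne_zero.mp ((Matrix.isUnit_iff_isUnit_det _).mp hu)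
      have h2 := (det_ne_zero_iff_ker_finrank N _).mp hdM
      rw [← key z] at h2
      exact (det_ne_zero_iff_ker_finrank n _).mpr h2 hd
end

section
/- For all k, j ∈ {1,…,N} one has 𝒜_{kj} = ⟨p_k, z·p_j⟩_{L²(σ)}; that is, the matrix representation of the operator of multiplication by the independent variable in L²(ℝ,σ) with respect to the orthonormal basis {p_1,…,p_N} is again the matrix 𝒜. -/
open Polynomial Matrix

/-- The matrix representation of multiplication by the variable w.r.t. {p_k} is 𝒜. -/
theorem stmt2
    (n N : ℕ) (hn : 0 < n) (hnN : n < N)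
    (A : Matrix (Fin N) (Fin N) ℝ) (m : ℕ → ℕ)
    (hA : MatrixClassM n N A m)
    (T : Matrix (Fin n) (Fin n) ℝ)
    (hT_upper : ∀ i j : Fin n, j < i → T i j = 0)
    (hT_diag : ∀ j : Fin n, T j j ≠ 0)
    (φ : Fin n → Fin N → Polynomial ℂ)
    (hφ_init : ∀ (j : Fin n) (i : Fin n),
      φ j (Fin.castLE (le_of_lt hnN) i) = C ((T j i : ℂ)))
    (hφ_rec : ∀ (j : Fin n) (k : Fin N),
      (∀ i, 1 ≤ i → i ≤ n → m i ≠ (k : ℕ) + 1) →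
      ∑ l, C ((A k l : ℂ)) * φ j l = X * φ j k)
    (x : Fin N → ℝ) (v : Fin N → Fin N → ℂ)
    (heig : ∀ k, (A.map (fun a => (a : ℂ))).mulVec (v k) = (x k : ℂ) • v k)
    (horm : ∀ k l : Fin N,
      ∑ i, (starRingEnd ℂ) (v k i) * v l i = if k = l then 1 else 0)
    (αc : Fin N → Fin n → ℂ)
    (hαc : ∀ (k : Fin N) (i : Fin N),
      v k i = ∑ j, αc k j * (φ j i).eval ((x k : ℂ)))
    :
    ∀ k j : Fin N,
      ((A k j : ℂ))
        = L2inner x (sigmaJump αc) (fun i => φ i k) (fun i => X * φ i j) := by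
  intro k j
  -- column orthonormality
  have hcol : ∀ a b : Fin N, ∑ κ, (starRingEnd ℂ) (v κ a) * v κ b
      = if a = b then 1 else 0 := by
    intro a b
    set U : Matrix (Fin N) (Fin N) ℂ := Matrix.of fun p q => v p q with hU
    have h1 : U * Uᴴ = 1 := by
      ext p q
      simp only [Matrix.mul_apply, Matrix.conjTranspose_apply, Matrix.one_apply, hU,
        Matrix.of_apply, ← starRingEnd_apply]
      calc ∑ i, v p i * (starRingEnd ℂ) (v q i)
          = ∑ i, (starRingEnd ℂ) (v q i) * v p i :=
            Finset.sum_congr rfl fun i _ => mul_comm _ _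
        _ = if q = p then 1 else 0 := horm q p
        _ = if p = q then 1 else 0 := by simp [eq_comm]
    have h2 : Uᴴ * U = 1 := mul_eq_one_comm.mp h1
    have := congrFun (congrFun h2 a) b
    simpa [Matrix.mul_apply, Matrix.conjTranspose_apply, Matrix.one_apply, hU,
      Matrix.of_apply, ← starRingEnd_apply] using this
  -- eigen relation entrywise
  have hx : ∀ (κ : Fin N) (b : Fin N),
      (x κ : ℂ) * v κ b = ∑ l, ((A b l : ℂ)) * v κ l := by
    intro κ b
    have := congrFun (heig κ) b
    simpa [Matrix.mulVec, Matrix.map_apply, dotProduct, Pi.smul_apply, smul_eq_mul]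
      using this.symm
  -- reduce L2inner to spectral sum
  have hL : L2inner x (sigmaJump αc) (fun i => φ i k) (fun i => X * φ i j)
      = ∑ κ, (starRingEnd ℂ) (v κ k) * ((x κ : ℂ) * v κ j) := by
    unfold L2inner sigmaJump
    refine Finset.sum_congr rfl fun κ _ => ?_
    rw [hαc κ k, hαc κ j, map_sum, Finset.mul_sum, Finset.sum_mul_sum]
    refine Finset.sum_congr rfl fun i _ => Finset.sum_congr rfl fun j' _ => ?_
    simp only [Matrix.of_apply, eval_mul, eval_X, _root_.map_mul]
    ring
  rw [hL]; symm
  calc ∑ κ, (starRingEnd ℂ) (v κ k) * ((x κ : ℂ) * v κ j)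
      = ∑ κ, ∑ l, (starRingEnd ℂ) (v κ k) * (((A j l : ℂ)) * v κ l) := by
        refine Finset.sum_congr rfl fun κ _ => ?_
        rw [hx, Finset.mul_sum]
    _ = ∑ l, ∑ κ, (starRingEnd ℂ) (v κ k) * (((A j l : ℂ)) * v κ l) :=
        Finset.sum_comm
    _ = ∑ l, ((A j l : ℂ)) * ∑ κ, (starRingEnd ℂ) (v κ k) * v κ l := by
        refine Finset.sum_congr rfl fun l _ => ?_
        rw [Finset.mul_sum]
        exact Finset.sum_congr rfl fun κ _ => by ring
    _ = ((A j k : ℂ)) := by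
        simp only [hcol]
        simp
    _ = ((A k j : ℂ)) := by
        have := hA.symm
        rw [Matrix.IsSymm] at this
        have h := congrFun (congrFun this j) k
        simp only [Matrix.transpose_apply] at h
        rw [h]
end

section
/- For every k ∈ {1,…,N} one has 𝒯* σ_k 𝒯 = ( conj((α(x_k))_i) · (α(x_k))_j )_{i,j=1}^n, where (α(x_k))_i denotes the i-th component of the eigenvector α(x_k) ∈ ℂ^N. Consequently 𝒯* σ^𝒯(t) 𝒯 = σ^I(t) for every t ∈ ℝ, where σ^𝒯(t) := ∑_{x_k<t} σ_k and σ^I is the spectral function built in the same way from the initial-condition matrix 𝒯 = I. -/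
open Polynomial Matrix

/-- 𝒯* σ_k 𝒯 equals the outer product of eigenvector components; hence 𝒯* σ^𝒯 𝒯 = σ^I. -/
theorem stmt3
    (n N : ℕ) (hn : 0 < n) (hnN : n < N)
    (A : Matrix (Fin N) (Fin N) ℝ) (m : ℕ → ℕ)
    (hA : MatrixClassM n N A m)
    (T : Matrix (Fin n) (Fin n) ℝ)
    (hT_upper : ∀ i j : Fin n, j < i → T i j = 0)
    (hT_diag : ∀ j : Fin n, T j j ≠ 0)
    (φ : Fin n → Fin N → Polynomial ℂ)
    (hφ_init : ∀ (j : Fin n) (i : Fin n),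
      φ j (Fin.castLE (le_of_lt hnN) i) = C ((T j i : ℂ)))
    (hφ_rec : ∀ (j : Fin n) (k : Fin N),
      (∀ i, 1 ≤ i → i ≤ n → m i ≠ (k : ℕ) + 1) →
      ∑ l, C ((A k l : ℂ)) * φ j l = X * φ j k)
    (x : Fin N → ℝ) (v : Fin N → Fin N → ℂ)
    (heig : ∀ k, (A.map (fun a => (a : ℂ))).mulVec (v k) = (x k : ℂ) • v k)
    (horm : ∀ k l : Fin N,
      ∑ i, (starRingEnd ℂ) (v k i) * v l i = if k = l then 1 else 0)
    (αc : Fin N → Fin n → ℂ)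
    (hαc : ∀ (k : Fin N) (i : Fin N),
      v k i = ∑ j, αc k j * (φ j i).eval ((x k : ℂ)))
    :
    (∀ k : Fin N,
      (T.map (fun a => (a : ℂ)))ᴴ * sigmaJump αc k * T.map (fun a => (a : ℂ))
        = Matrix.of fun i j : Fin n =>
            (starRingEnd ℂ) (v k (Fin.castLE (le_of_lt hnN) i))
              * v k (Fin.castLE (le_of_lt hnN) j)) ∧
    (∀ t : ℝ,
      (T.map (fun a => (a : ℂ)))ᴴ
          * (∑ k ∈ Finset.univ.filter (fun k => x k < t), sigmaJump αc k)
          * T.map (fun a => (a : ℂ))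
        = ∑ k ∈ Finset.univ.filter (fun k => x k < t),
            Matrix.of fun i j : Fin n =>
              (starRingEnd ℂ) (v k (Fin.castLE (le_of_lt hnN) i))
                * v k (Fin.castLE (le_of_lt hnN) j)) := by
  have key : ∀ k : Fin N,
      (T.map (fun a => (a : ℂ)))ᴴ * sigmaJump αc k * T.map (fun a => (a : ℂ))
        = Matrix.of fun i j : Fin n =>
            (starRingEnd ℂ) (v k (Fin.castLE (le_of_lt hnN) i))
              * v k (Fin.castLE (le_of_lt hnN) j) := by
    intro k
    ext i j
    have hv : ∀ i : Fin n, v k (Fin.castLE (le_of_lt hnN) i)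
        = ∑ a, αc k a * (T a i : ℂ) := by
      intro i
      rw [hαc]
      refine Finset.sum_congr rfl fun a _ => ?_
      rw [hφ_init, eval_C]
    simp only [Matrix.mul_apply, conjTranspose_apply, Matrix.map_apply, sigmaJump,
      Matrix.of_apply, hv, map_sum, _root_.map_mul, Complex.conj_ofReal,
      RCLike.star_def, Finset.sum_mul, Finset.mul_sum]
    refine Finset.sum_congr rfl fun b _ => ?_
    refine Finset.sum_congr rfl fun a _ => ?_
    ring
  refine ⟨key, fun t => ?_⟩
  rw [Finset.mul_sum, Finset.sum_mul]
  exact Finset.sum_congr rfl fun k _ => key k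
end

section
/- One has 𝒯* ( ∑_{k=1}^N σ_k ) 𝒯 = I_n, the n×n identity matrix; that is, 𝒯* (∫_ℝ dσ^𝒯) 𝒯 = ∫_ℝ dσ^I = I. -/
open Polynomial Matrix

/-- 𝒯* (∑_k σ_k) 𝒯 = I. -/
theorem stmt4
    (n N : ℕ) (hn : 0 < n) (hnN : n < N)
    (A : Matrix (Fin N) (Fin N) ℝ) (m : ℕ → ℕ)
    (hA : MatrixClassM n N A m)
    (T : Matrix (Fin n) (Fin n) ℝ)
    (hT_upper : ∀ i j : Fin n, j < i → T i j = 0)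
    (hT_diag : ∀ j : Fin n, T j j ≠ 0)
    (φ : Fin n → Fin N → Polynomial ℂ)
    (hφ_init : ∀ (j : Fin n) (i : Fin n),
      φ j (Fin.castLE (le_of_lt hnN) i) = C ((T j i : ℂ)))
    (hφ_rec : ∀ (j : Fin n) (k : Fin N),
      (∀ i, 1 ≤ i → i ≤ n → m i ≠ (k : ℕ) + 1) →
      ∑ l, C ((A k l : ℂ)) * φ j l = X * φ j k)
    (x : Fin N → ℝ) (v : Fin N → Fin N → ℂ)
    (heig : ∀ k, (A.map (fun a => (a : ℂ))).mulVec (v k) = (x k : ℂ) • v k)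
    (horm : ∀ k l : Fin N,
      ∑ i, (starRingEnd ℂ) (v k i) * v l i = if k = l then 1 else 0)
    (αc : Fin N → Fin n → ℂ)
    (hαc : ∀ (k : Fin N) (i : Fin N),
      v k i = ∑ j, αc k j * (φ j i).eval ((x k : ℂ)))
    :
    (T.map (fun a => (a : ℂ)))ᴴ * (∑ k, sigmaJump αc k) * T.map (fun a => (a : ℂ))
      = (1 : Matrix (Fin n) (Fin n) ℂ) := by
  classical
  set M : Matrix (Fin N) (Fin N) ℂ := Matrix.of fun k i => v k i with hM
  have h1 : M * Mᴴ = 1 := by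
    ext k l
    have hc := congrArg (starRingEnd ℂ) (horm k l)
    simp only [map_sum, _root_.map_mul, starRingEnd_self_apply] at hc
    simp only [Matrix.mul_apply, Matrix.conjTranspose_apply, hM, Matrix.of_apply,
      Matrix.one_apply, ← starRingEnd_apply]
    rw [hc]
    split <;> simp
  have h2 : Mᴴ * M = 1 := mul_eq_one_comm.mp h1
  have key : ∀ i j : Fin N, (∑ k, (starRingEnd ℂ) (v k i) * v k j) = if i = j then 1 else 0 := by
    intro i j
    have := congrFun (congrFun h2 i) j
    simpa [Matrix.mul_apply, Matrix.conjTranspose_apply, hM, Matrix.one_apply] using this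
  have hv : ∀ (k : Fin N) (i : Fin n),
      v k (Fin.castLE (le_of_lt hnN) i) = ∑ a, αc k a * ((T a i : ℝ) : ℂ) := by
    intro k i
    rw [hαc]
    simp [hφ_init]
  ext i j
  have hcast : (Fin.castLE (le_of_lt hnN) i = Fin.castLE (le_of_lt hnN) j) ↔ i = j :=
    ⟨fun h => Fin.castLE_injective _ h, fun h => by rw [h]⟩
  calc ((T.map (fun a => (a : ℂ)))ᴴ * (∑ k, sigmaJump αc k) * T.map (fun a => (a : ℂ))) i j
      = ∑ k, (starRingEnd ℂ) (v k (Fin.castLE (le_of_lt hnN) i))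
          * v k (Fin.castLE (le_of_lt hnN) j) := by
        simp only [Matrix.mul_apply, Matrix.sum_apply, Matrix.conjTranspose_apply,
          Matrix.map_apply, sigmaJump, Matrix.of_apply, hv, map_sum, _root_.map_mul,
          Finset.sum_mul, Finset.mul_sum]
        rw [Finset.sum_comm]
        refine Finset.sum_congr rfl fun k _ => ?_
        refine Finset.sum_congr rfl fun a _ => ?_
        refine Finset.sum_congr rfl fun b _ => ?_
        simp only [Complex.conj_ofReal, ← starRingEnd_apply]
        ring
    _ = (1 : Matrix (Fin n) (Fin n) ℂ) i j := by
        rw [key]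
        simp [hcast, Matrix.one_apply]
end

section
/- There exist generators r_1,…,r_n of 𝕊. Moreover, for any generators r_1,…,r_n of 𝕊, the heights h(r_1),…,h(r_n) are pairwise distinct modulo n, and every element of 𝕊 admits a unique representation ∑_{j=1}^n S_j(z) r_j(z) with scalar polynomials S_j; that is, 𝕊 = 𝕄(r_1) ∔ ⋯ ∔ 𝕄(r_n). -/
open Polynomial Matrix

/-!
Interleaving coefficients, `r ↦ ∑ⱼ Rⱼ(Xⁿ) Xʲ`, identifies vector polynomials with scalar ones
and the height with the degree; multiplying `r` by `S(z)` multiplies the image by `S(Xⁿ)`, which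
shifts the degree by a multiple of `n`. So a combination of vectors whose heights are pairwise
distinct mod `n` has the height of one of its nonzero terms, and vanishes only if all its
coefficients do.

If two generators had heights congruent mod `n`, subtracting a multiple of the earlier one from
the later one would lower its height without entering the span of its predecessors; hence the
heights of generators are distinct mod `n`, and the generators are independent. Every `s ∈ 𝕊`
is then reduced to `0` by subtracting multiples of the generator whose height is `≡ h(s)`.
Generators exist because, as long as fewer than `n` have been chosen, some residue `ρ` is
missed, and `∏ₖ (z - zₖ) · e_ρ ∈ 𝕊` has height `≡ ρ`, so it lies outside their span.
-/

namespace VectorPolynomial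

variable {n : ℕ}

section Interleave

variable {R : Type*} [CommSemiring R]

noncomputable def interleave (n : ℕ) :
    (Fin n → R[X]) →ₛₗ[(expand R n : R[X] →+* R[X])] R[X] where
  toFun r := ∑ j, expand R n (r j) * X ^ (j : ℕ)
  map_add' r s := by simp only [Pi.add_apply, map_add, add_mul, Finset.sum_add_distrib]
  map_smul' p r := by
    simp only [Pi.smul_apply, smul_eq_mul, map_mul, Finset.mul_sum, mul_assoc]
    rfl

theorem interleave_apply (r : Fin n → R[X]) :
    interleave n r = ∑ j, expand R n (r j) * X ^ (j : ℕ) := rfl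

theorem coeff_interleave_mul_add (r : Fin n → R[X]) (j : Fin n) (d : ℕ) :
    (interleave n r).coeff (n * d + j) = (r j).coeff d := by
  have hn : 0 < n := j.pos
  rw [interleave_apply, finsetSum_coeff, Finset.sum_eq_single_of_mem j (Finset.mem_univ j)]
  · rw [coeff_mul_X_pow, coeff_expand_mul' hn]
  · intro i _ hij
    rw [coeff_mul_X_pow']
    split_ifs with hle
    · rw [coeff_expand hn, if_neg]
      rintro ⟨t, ht⟩
      have h := congrArg (· % n) (show n * d + j = n * t + i by omega)
      simp only [Nat.mul_add_mod, Nat.mod_eq_of_lt j.isLt, Nat.mod_eq_of_lt i.isLt] at h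
      exact hij (Fin.ext h.symm)
    · rfl

theorem coeff_interleave (hn : 0 < n) (r : Fin n → R[X]) (m : ℕ) :
    (interleave n r).coeff m = (r ⟨m % n, Nat.mod_lt _ hn⟩).coeff (m / n) := by
  conv_lhs => rw [← Nat.div_add_mod m n]
  exact coeff_interleave_mul_add r ⟨m % n, Nat.mod_lt _ hn⟩ (m / n)

theorem interleave_eq_zero_iff {r : Fin n → R[X]} : interleave n r = 0 ↔ r = 0 := by
  refine ⟨fun h => funext fun j => Polynomial.ext fun d => ?_, fun h => h ▸ map_zero _⟩
  rw [← coeff_interleave_mul_add, h, coeff_zero, Pi.zero_apply, coeff_zero]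

theorem interleave_single (i : Fin n) (p : R[X]) :
    interleave n (Pi.single i p) = expand R n p * X ^ (i : ℕ) := by
  rw [interleave_apply, Finset.sum_eq_single_of_mem i (Finset.mem_univ i)]
  · rw [Pi.single_eq_same]
  · intro j _ hj
    rw [Pi.single_eq_of_ne hj, map_zero, zero_mul]

theorem interleave_sum_smul {ι : Type*} (s : Finset ι) (c : ι → R[X]) (g : ι → Fin n → R[X]) :
    interleave n (∑ i ∈ s, c i • g i) = ∑ i ∈ s, expand R n (c i) * interleave n (g i) := by
  simp only [map_sum, map_smulₛₗ, smul_eq_mul]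
  rfl

end Interleave

theorem degree_interleave (hn : 0 < n) (r : Fin n → ℂ[X]) :
    (interleave n r).degree = vheight n r := by
  apply le_antisymm
  · rw [degree_le_iff_coeff_zero]
    intro m hm
    by_contra hc
    rw [coeff_interleave hn] at hc
    set j : Fin n := ⟨m % n, Nat.mod_lt _ hn⟩
    have hle : ((m / n : ℕ) : WithBot ℕ) ≤ (r j).degree := le_degree_of_ne_zero hc
    refine (lt_irrefl (m : WithBot ℕ)) (lt_of_le_of_lt ?_ hm)
    calc (m : WithBot ℕ) = n • ((m / n : ℕ) : WithBot ℕ) + ((j : ℕ) : WithBot ℕ) := by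
          rw [nsmul_eq_mul, ← Nat.cast_mul, ← Nat.cast_add, Nat.div_add_mod]
      _ ≤ n • (r j).degree + ((j : ℕ) : WithBot ℕ) := by gcongr
      _ ≤ vheight n r :=
          Finset.le_sup (f := fun j : Fin n => n • (r j).degree + ((j : ℕ) : WithBot ℕ))
            (Finset.mem_univ j)
  · refine Finset.sup_le fun j _ => ?_
    by_cases hj : r j = 0
    · rw [hj, degree_zero, nsmul_eq_mul, WithBot.mul_bot (by exact_mod_cast hn.ne'),
        WithBot.bot_add]
      exact bot_le
    · rw [degree_eq_natDegree hj, nsmul_eq_mul, ← Nat.cast_mul, ← Nat.cast_add]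
      apply le_degree_of_ne_zero
      rw [coeff_interleave_mul_add]
      exact mt leadingCoeff_eq_zero.mp hj

section ExpandMul

variable {K : Type*} [Field K]

theorem natDegree_expand_mul_mod (hn : 0 < n) {p q : K[X]} (hp : p ≠ 0) (hq : q ≠ 0) :
    (expand K n p * q).natDegree % n = q.natDegree % n := by
  rw [natDegree_mul ((expand_ne_zero hn).mpr hp) hq, natDegree_expand,
    Nat.mul_add_mod_self_right]

theorem exists_degree_sub_expand_mul_lt {p q : K[X]} (hq : q ≠ 0)
    (hle : q.degree ≤ p.degree) (hmod : p.natDegree % n = q.natDegree % n) :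
    ∃ m : K[X], (p - expand K n m * q).degree < p.degree := by
  have hp : p ≠ 0 := ne_zero_of_degree_ge_degree hle hq
  have hdvd : n ∣ p.natDegree - q.natDegree :=
    Nat.dvd_of_mod_eq_zero (Nat.sub_mod_eq_zero_of_mod_eq hmod)
  have hqp : q.natDegree ≤ p.natDegree := natDegree_le_natDegree hle
  refine ⟨C (p.leadingCoeff / q.leadingCoeff) * X ^ ((p.natDegree - q.natDegree) / n), ?_⟩
  have hlc : p.leadingCoeff / q.leadingCoeff ≠ 0 :=
    div_ne_zero (leadingCoeff_ne_zero.mpr hp) (leadingCoeff_ne_zero.mpr hq)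
  rw [map_mul, expand_C, map_pow, expand_X, ← pow_mul, Nat.mul_div_cancel' hdvd]
  refine degree_sub_lt_left ?_ hp ?_
  · rw [degree_mul, degree_mul, degree_C hlc, zero_add, degree_X_pow, degree_eq_natDegree hp,
      degree_eq_natDegree hq, ← Nat.cast_add, Nat.sub_add_cancel hqp]
  · rw [leadingCoeff_mul, leadingCoeff_mul, leadingCoeff_C, leadingCoeff_X_pow, mul_one,
      div_mul_cancel₀ _ (leadingCoeff_ne_zero.mpr hq)]

theorem sum_expand_mul_ne_zero_and_exists_mod_eq (hn : 0 < n) {ι : Type*} (s : Finset ι)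
    (c q : ι → K[X]) (hq : ∀ i ∈ s, q i ≠ 0)
    (hres : Set.InjOn (fun i => (q i).natDegree % n) s) (hc : ∃ i ∈ s, c i ≠ 0) :
    ∑ i ∈ s, expand K n (c i) * q i ≠ 0 ∧
      ∃ i ∈ s, (∑ i ∈ s, expand K n (c i) * q i).natDegree % n = (q i).natDegree % n := by
  set f := fun i => expand K n (c i) * q i
  have hf : ∀ i ∈ s, f i ≠ 0 → c i ≠ 0 := fun i _ h hc => h (by simp [f, hc])
  have hfmod : ∀ i ∈ s, f i ≠ 0 → (f i).natDegree % n = (q i).natDegree % n :=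
    fun i hi h => natDegree_expand_mul_mod hn (hf i hi h) (hq i hi)
  have hdeg : (∑ i ∈ s, f i).degree = s.sup fun i => (f i).degree := by
    refine degree_sum_eq_of_disjoint f s fun i ⟨hi, hfi⟩ i' ⟨hi', hfi'⟩ hne heq => hne ?_
    refine hres hi hi' ?_
    simp only [← hfmod i hi hfi, ← hfmod i' hi' hfi']
    exact congrArg (· % n) (natDegree_eq_of_degree_eq heq)
  obtain ⟨i₁, hi₁, hc₁⟩ := hc
  obtain ⟨i₀, hi₀, hsup⟩ := Finset.exists_mem_eq_sup s ⟨i₁, hi₁⟩ fun i => (f i).degree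
  have hf₁ : f i₁ ≠ 0 := mul_ne_zero ((expand_ne_zero hn).mpr hc₁) (hq i₁ hi₁)
  have hf₀ : f i₀ ≠ 0 := by
    intro h
    have := hsup ▸ Finset.le_sup (f := fun i => (f i).degree) hi₁
    rw [h, degree_zero, le_bot_iff, degree_eq_bot] at this
    exact hf₁ this
  rw [hsup] at hdeg
  refine ⟨fun h => hf₀ (degree_eq_bot.mp (hdeg.symm.trans (h ▸ degree_zero))), i₀, hi₀, ?_⟩
  rw [natDegree_eq_of_degree_eq hdeg, hfmod i₀ hi₀ hf₀]

end ExpandMul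

noncomputable def heightMod (n : ℕ) (r : Fin n → ℂ[X]) : ℕ := (interleave n r).natDegree % n

theorem heightMod_lt (hn : 0 < n) (r : Fin n → ℂ[X]) : heightMod n r < n := Nat.mod_lt _ hn

theorem heightMod_of_vheight_eq (hn : 0 < n) {r : Fin n → ℂ[X]} {a : ℕ}
    (h : vheight n r = a) : heightMod n r = a % n := by
  rw [← degree_interleave hn] at h
  rw [heightMod, natDegree_eq_of_degree_eq_some h]

theorem heightMod_single {P : ℂ[X]} (hP : P ≠ 0) (i : Fin n) :
    heightMod n (Pi.single i P) = i := by
  rw [heightMod, interleave_single, natDegree_mul ((expand_ne_zero i.pos).mpr hP)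
    (pow_ne_zero _ X_ne_zero), natDegree_expand, natDegree_X_pow, Nat.mul_comm,
    Nat.mul_add_mod, Nat.mod_eq_of_lt i.isLt]

theorem sum_smul_ne_zero_and_exists_heightMod_eq (hn : 0 < n) {ι : Type*} (s : Finset ι)
    (c : ι → ℂ[X]) (g : ι → Fin n → ℂ[X]) (hg : ∀ i ∈ s, g i ≠ 0)
    (hres : Set.InjOn (fun i => heightMod n (g i)) s) (hc : ∃ i ∈ s, c i ≠ 0) :
    ∑ i ∈ s, c i • g i ≠ 0 ∧
      ∃ i ∈ s, heightMod n (∑ i ∈ s, c i • g i) = heightMod n (g i) := by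
  obtain ⟨hne, i, hi, hmod⟩ := sum_expand_mul_ne_zero_and_exists_mod_eq hn s c
    (fun i => interleave n (g i)) (fun i hi => mt interleave_eq_zero_iff.mp (hg i hi)) hres hc
  rw [← interleave_sum_smul] at hne hmod
  exact ⟨fun h => hne (h ▸ map_zero _), i, hi, hmod⟩

theorem exists_vheight_sub_smul_lt (hn : 0 < n) {s t : Fin n → ℂ[X]} (ht : t ≠ 0)
    (hle : vheight n t ≤ vheight n s) (hmod : heightMod n s = heightMod n t) :
    ∃ m : ℂ[X], vheight n (s - m • t) < vheight n s := by
  simp only [← degree_interleave hn] at hle ⊢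
  obtain ⟨m, hm⟩ := exists_degree_sub_expand_mul_lt (mt interleave_eq_zero_iff.mp ht) hle hmod
  exact ⟨m, by rwa [map_sub, map_smulₛₗ]⟩

theorem exists_heightMod_eq_of_mem_span (hn : 0 < n) {ι : Type*} {g : ι → Fin n → ℂ[X]}
    {s : Set ι} (hg : ∀ i ∈ s, g i ≠ 0) (hres : Set.InjOn (fun i => heightMod n (g i)) s)
    {x : Fin n → ℂ[X]} (hx : x ∈ Submodule.span ℂ[X] (g '' s)) (hx0 : x ≠ 0) :
    ∃ i ∈ s, heightMod n x = heightMod n (g i) := by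
  obtain ⟨l, hl, rfl⟩ := (Finsupp.mem_span_image_iff_linearCombination ℂ[X]).mp hx
  have hls : ∀ i ∈ l.support, i ∈ s := fun i hi => hl hi
  obtain ⟨i, hi⟩ : l.support.Nonempty :=
    Finset.nonempty_iff_ne_empty.mpr fun h => by
      rw [Finsupp.support_eq_empty.mp h, map_zero] at hx0
      exact hx0 rfl
  obtain ⟨-, j, hj, hmod⟩ := sum_smul_ne_zero_and_exists_heightMod_eq hn l.support l g
    (fun i hi => hg i (hls i hi)) (hres.mono hls) ⟨i, hi, Finsupp.mem_support_iff.mp hi⟩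
  exact ⟨j, hls j hj, hmod⟩

theorem linearIndependent_of_injective_heightMod (hn : 0 < n) {ι : Type*}
    {g : ι → Fin n → ℂ[X]} (hg : ∀ i, g i ≠ 0)
    (hres : Function.Injective fun i => heightMod n (g i)) : LinearIndependent ℂ[X] g := by
  refine linearIndependent_iff'.mpr fun s c hsum i hi => ?_
  by_contra hc
  exact (sum_smul_ne_zero_and_exists_heightMod_eq hn s c g (fun i _ => hg i)
    hres.injOn ⟨i, hi, hc⟩).1 hsum

theorem sum_mul_eq_sum_smul {ι : Type*} (s : Finset ι) (c : ι → ℂ[X]) (r : ι → Fin n → ℂ[X]) :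
    (fun jj => ∑ i ∈ s, c i * r i jj) = ∑ i ∈ s, c i • r i := by
  ext1 jj
  simp only [Finset.sum_apply, Pi.smul_apply, smul_eq_mul]

theorem prevSpan_eq_span (r : Fin n → Fin n → ℂ[X]) (j : Fin n) :
    prevSpan r j = Submodule.span ℂ[X] (r '' Set.Iio j) := by
  ext s
  have hsub (c : Fin n → ℂ[X]) : ∑ i ∈ Finset.univ.filter (· < j), c i • r i =
      ∑ i : Set.Iio j, c i • r i :=
    Finset.sum_subtype _ (fun i => by simp) (fun i => c i • r i)
  simp only [prevSpan, Set.mem_ofPred_eq, SetLike.mem_coe, Fintype.mem_span_image_iff_exists_fun,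
    sum_mul_eq_sum_smul, hsub, eq_comm (a := s)]
  constructor
  · rintro ⟨c, hc⟩
    exact ⟨fun i => c i, hc⟩
  · rintro ⟨c, hc⟩
    refine ⟨fun i => if h : i < j then c ⟨i, h⟩ else 0, ?_⟩
    simp only [← hc]
    exact Finset.sum_congr rfl fun i _ => by simp only [dif_pos (Set.mem_Iio.mp i.2)]

theorem ne_zero_of_notMem_prevSpan {r : Fin n → Fin n → ℂ[X]} {j : Fin n} {s : Fin n → ℂ[X]}
    (h : s ∉ prevSpan r j) : s ≠ 0 := by
  rintro rfl
  exact h (prevSpan_eq_span r j ▸ Submodule.zero_mem _)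

theorem prevSpan_congr {r r' : Fin n → Fin n → ℂ[X]} {j : Fin n}
    (h : ∀ i < j, r i = r' i) : prevSpan r j = prevSpan r' j := by
  rw [prevSpan_eq_span, prevSpan_eq_span, Set.image_congr (s := Set.Iio j) fun i hi => h i hi]

section Generators

variable {M : Submodule ℂ[X] (Fin n → ℂ[X])} {r : Fin n → Fin n → ℂ[X]}

def IsGenAt (S : Set (Fin n → ℂ[X])) (r : Fin n → Fin n → ℂ[X]) (j : Fin n) : Prop :=
  r j ≠ 0 ∧ r j ∈ S \ prevSpan r j ∧
    ∀ s ∈ S \ prevSpan r j, s ≠ 0 → vheight n (r j) ≤ vheight n s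

theorem isGenAt_congr {S : Set (Fin n → ℂ[X])} {r' : Fin n → Fin n → ℂ[X]} {j : Fin n}
    (h : ∀ i ≤ j, r i = r' i) : IsGenAt S r j ↔ IsGenAt S r' j := by
  rw [IsGenAt, IsGenAt, prevSpan_congr fun i hi => h i hi.le, h j le_rfl]

theorem IsGenAt.heightMod_ne (hn : 0 < n) {j₁ j₂ : Fin n} (h₁ : IsGenAt M r j₁)
    (h₂ : IsGenAt M r j₂) (h : j₁ < j₂) : heightMod n (r j₁) ≠ heightMod n (r j₂) := by
  intro heq
  obtain ⟨hne₁, ⟨hM₁, -⟩, hmin₁⟩ := h₁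
  obtain ⟨hne₂, ⟨hM₂, hprev₂⟩, hmin₂⟩ := h₂
  have hle : vheight n (r j₁) ≤ vheight n (r j₂) := by
    refine hmin₁ _ ⟨hM₂, fun hmem => hprev₂ ?_⟩ hne₂
    rw [prevSpan_eq_span] at hmem ⊢
    exact Submodule.span_mono (Set.image_mono (Set.Iio_subset_Iio h.le)) hmem
  obtain ⟨m, hm⟩ := exists_vheight_sub_smul_lt hn hne₁ hle heq.symm
  have hprev : r j₂ - m • r j₁ ∉ prevSpan r j₂ := by
    rw [prevSpan_eq_span] at hprev₂ ⊢
    intro hmem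
    have hmul : m • r j₁ ∈ Submodule.span ℂ[X] (r '' Set.Iio j₂) :=
      Submodule.smul_mem _ m (Submodule.subset_span ⟨j₁, h, rfl⟩)
    exact hprev₂ (by simpa using Submodule.add_mem _ hmem hmul)
  have := hmin₂ _ ⟨M.sub_mem hM₂ (M.smul_mem m hM₁), hprev⟩ (ne_zero_of_notMem_prevSpan hprev)
  exact lt_irrefl _ (this.trans_lt hm)

theorem injOn_heightMod (hn : 0 < n) {s : Set (Fin n)} (h : ∀ j ∈ s, IsGenAt M r j) :
    Set.InjOn (fun i => heightMod n (r i)) s := by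
  intro i hi i' hi' heq
  by_contra hne
  rcases lt_or_gt_of_ne hne with hlt | hlt
  · exact (h i hi).heightMod_ne hn (h i' hi') hlt heq
  · exact (h i' hi').heightMod_ne hn (h i hi) hlt heq.symm

theorem exists_notMem_prevSpan (hn : 0 < n) {P : ℂ[X]} (hP : P ≠ 0)
    (hPM : ∀ i, Pi.single i P ∈ M) {j : Fin n} (h : ∀ i < j, IsGenAt M r i) :
    ∃ s ∈ M, s ∉ prevSpan r j := by
  have hcard : ((Finset.Iio j).image fun i => heightMod n (r i)).card < (Finset.range n).card :=
    calc _ ≤ (Finset.Iio j).card := Finset.card_image_le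
      _ < (Finset.range n).card := by rw [Fin.card_Iio, Finset.card_range]; exact j.isLt
  obtain ⟨ρ, hρ, hρr⟩ := Finset.exists_mem_notMem_of_card_lt_card hcard
  set e : Fin n → ℂ[X] := Pi.single ⟨ρ, Finset.mem_range.mp hρ⟩ P
  refine ⟨e, hPM _, fun he => hρr ?_⟩
  rw [prevSpan_eq_span] at he
  obtain ⟨i, hi, hmod⟩ := exists_heightMod_eq_of_mem_span hn (fun i hi => (h i hi).1)
    (injOn_heightMod hn fun i hi => h i hi) he (by simpa [e] using hP)
  rw [heightMod_single hP] at hmod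
  exact Finset.mem_image.mpr ⟨i, Finset.mem_Iio.mpr hi, hmod.symm⟩

theorem exists_isGenAt_update {S : Set (Fin n → ℂ[X])} {j : Fin n}
    (hS : ∃ s ∈ S, s ∉ prevSpan r j) : ∃ s, IsGenAt S (Function.update r j s) j := by
  obtain ⟨s₀, hs₀⟩ := hS
  set T := S \ prevSpan r j
  have hT : T.Nonempty := ⟨s₀, hs₀⟩
  have hspan : prevSpan (Function.update r j (Function.argminOn (vheight n) T hT)) j =
      prevSpan r j :=
    prevSpan_congr fun i hi => Function.update_of_ne hi.ne _ _
  have hmem := Function.argminOn_mem (vheight n) T hT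
  refine ⟨Function.argminOn (vheight n) T hT, ?_⟩
  rw [IsGenAt, hspan, Function.update_self]
  exact ⟨ne_zero_of_notMem_prevSpan hmem.2, hmem,
    fun s hs _ => Function.argminOn_le (vheight n) T hs⟩

theorem exists_isGenSeq (hn : 0 < n) {P : ℂ[X]} (hP : P ≠ 0) (hPM : ∀ i, Pi.single i P ∈ M) :
    ∃ r, IsGenSeq (M : Set (Fin n → ℂ[X])) r := by
  suffices ∀ m ≤ n, ∃ r : Fin n → Fin n → ℂ[X], ∀ i : Fin n, (i : ℕ) < m → IsGenAt M r i by
    obtain ⟨r, hr⟩ := this n le_rfl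
    exact ⟨r, fun i => hr i i.isLt⟩
  intro m hm
  induction m with
  | zero => exact ⟨0, fun i hi => absurd hi (Nat.not_lt_zero _)⟩
  | succ m ih =>
    obtain ⟨r, hr⟩ := ih (Nat.le_of_succ_le hm)
    set j : Fin n := ⟨m, hm⟩
    obtain ⟨s, hs⟩ :=
      exists_isGenAt_update (exists_notMem_prevSpan hn hP hPM (j := j) fun i hi => hr i hi)
    refine ⟨Function.update r j s, fun i hi => ?_⟩
    rcases Nat.lt_succ_iff_lt_or_eq.mp hi with hi | hi
    · exact (isGenAt_congr fun i' hi' =>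
        (Function.update_of_ne (hi'.trans_lt hi).ne _ _).symm).mp (hr i hi)
    · rwa [show i = j from Fin.ext hi]

theorem _root_.IsGenSeq.injective_heightMod (hn : 0 < n)
    (hr : IsGenSeq (M : Set (Fin n → ℂ[X])) r) :
    Function.Injective fun i => heightMod n (r i) :=
  Set.injOn_univ.mp (injOn_heightMod hn fun j _ => hr j)

theorem _root_.IsGenSeq.exists_heightMod_eq (hn : 0 < n)
    (hr : IsGenSeq (M : Set (Fin n → ℂ[X])) r) {ρ : ℕ} (hρ : ρ < n) :
    ∃ i, heightMod n (r i) = ρ := by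
  let f : Fin n → Fin n := fun i => ⟨heightMod n (r i), heightMod_lt hn _⟩
  have hf : Function.Injective f := fun i i' h => hr.injective_heightMod hn (congrArg Fin.val h)
  obtain ⟨i, hi⟩ := Finite.surjective_of_injective hf ⟨ρ, hρ⟩
  exact ⟨i, congrArg Fin.val hi⟩

theorem _root_.IsGenSeq.linearIndependent (hn : 0 < n)
    (hr : IsGenSeq (M : Set (Fin n → ℂ[X])) r) :
    LinearIndependent ℂ[X] r :=
  linearIndependent_of_injective_heightMod hn (fun i => (hr i).1) (hr.injective_heightMod hn)

theorem _root_.IsGenSeq.le_span (hn : 0 < n)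
    (hr : IsGenSeq (M : Set (Fin n → ℂ[X])) r) :
    M ≤ Submodule.span ℂ[X] (Set.range r) := by
  intro s
  induction s using (InvImage.wf (vheight n) wellFounded_lt).induction with
  | _ s ih =>
  intro hs
  by_cases hs0 : s = 0
  · exact hs0 ▸ Submodule.zero_mem _
  obtain ⟨i, hi⟩ := hr.exists_heightMod_eq hn (heightMod_lt hn s)
  by_cases hprev : s ∈ prevSpan r i
  · rw [prevSpan_eq_span] at hprev
    exact Submodule.span_mono (Set.image_subset_range _ _) hprev
  obtain ⟨m, hm⟩ := exists_vheight_sub_smul_lt hn (hr i).1 ((hr i).2.2 s ⟨hs, hprev⟩ hs0) hi.symm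
  have hsub := ih _ hm (M.sub_mem hs (M.smul_mem m (hr i).2.1.1))
  simpa using Submodule.add_mem _ hsub (Submodule.smul_mem _ m (Submodule.subset_span ⟨i, rfl⟩))

theorem _root_.IsGenSeq.existsUnique_repr (hn : 0 < n)
    (hr : IsGenSeq (M : Set (Fin n → ℂ[X])) r)
    {s : Fin n → ℂ[X]} (hs : s ∈ M) :
    ∃! c : Fin n → ℂ[X], s = fun jj => ∑ i, c i * r i jj := by
  obtain ⟨c, hc⟩ := (Submodule.mem_span_range_iff_exists_fun ℂ[X]).mp (hr.le_span hn hs)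
  refine ⟨c, ((sum_mul_eq_sum_smul _ c r).trans hc).symm, fun c' hc' => funext ?_⟩
  have hc'' : s = ∑ i, c' i • r i := hc'.trans (sum_mul_eq_sum_smul _ c' r)
  exact Fintype.linearIndependent_iffₛ.mp (hr.linearIndependent hn) c' c
    (hc''.symm.trans hc.symm)

end Generators

section Interpolation

variable {N : ℕ}

def interpSubmodule (z : Fin N → ℂ) (α : Fin N → Fin n → ℂ) :
    Submodule ℂ[X] (Fin n → ℂ[X]) where
  carrier := interpSet z α
  add_mem' {r s} hr hs k := by
    simp only [Pi.add_apply, eval_add, mul_add, Finset.sum_add_distrib, hr k, hs k, add_zero]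
  zero_mem' k := by simp
  smul_mem' p r hr k := by
    simp only [Pi.smul_apply, smul_eq_mul, eval_mul, mul_left_comm _ (eval (z k) p),
      ← Finset.mul_sum, hr k, mul_zero]

theorem single_prod_mem_interpSubmodule (z : Fin N → ℂ) (α : Fin N → Fin n → ℂ) (i : Fin n) :
    Pi.single i (∏ k, (X - C (z k))) ∈ interpSubmodule z α := by
  intro k
  refine Finset.sum_eq_zero fun j _ => ?_
  rcases eq_or_ne j i with rfl | hj
  · rw [Pi.single_eq_same, eval_prod, Finset.prod_eq_zero (Finset.mem_univ k) (by simp),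
      mul_zero]
  · rw [Pi.single_eq_of_ne hj, eval_zero, mul_zero]

end Interpolation

end VectorPolynomial

open VectorPolynomial

theorem stmt7_general
    (n N : ℕ) (hn : 0 < n)
    (z : Fin N → ℂ) (α : Fin N → Fin n → ℂ)
    :
    (∃ r : Fin n → Fin n → Polynomial ℂ, IsGenSeq (interpSet z α) r) ∧
    (∀ r : Fin n → Fin n → Polynomial ℂ, IsGenSeq (interpSet z α) r →
      (∀ i j : Fin n, i ≠ j → ∀ a b : ℕ,
        vheight n (r i) = (a : WithBot ℕ) → vheight n (r j) = (b : WithBot ℕ) →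
          a % n ≠ b % n) ∧
      (∀ s ∈ interpSet z α,
        ∃! c : Fin n → Polynomial ℂ, s = fun jj => ∑ i, c i * r i jj)) := by
  have hP : ∏ k, (X - C (z k)) ≠ 0 := Finset.prod_ne_zero_iff.mpr fun k _ => X_sub_C_ne_zero _
  refine ⟨exists_isGenSeq hn hP (single_prod_mem_interpSubmodule z α), fun r hr => ?_⟩
  change IsGenSeq (interpSubmodule z α : Set (Fin n → ℂ[X])) r at hr
  refine ⟨fun i j hij a b ha hb => ?_, fun s hs => hr.existsUnique_repr hn hs⟩
  rw [← heightMod_of_vheight_eq hn ha, ← heightMod_of_vheight_eq hn hb]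
  exact (hr.injective_heightMod hn).ne hij

/-- Existence of n generators of 𝕊; their heights are distinct mod n and
𝕊 = 𝕄(r_1) ∔ ⋯ ∔ 𝕄(r_n). -/
theorem stmt7
    (n N : ℕ) (hn : 0 < n) (hnN : n < N)
    (z : Fin N → ℂ) (α : Fin N → Fin n → ℂ)
    (hα_ne : ∀ k, α k ≠ 0)
    (hα_col : ∀ j : Fin n, ∃ k, α k j ≠ 0)
    (hα_li : ∀ w : ℂ,
      LinearIndependent ℂ (fun k : {k : Fin N // z k = w} => α k.val))
    :
    (∃ r : Fin n → Fin n → Polynomial ℂ, IsGenSeq (interpSet z α) r) ∧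
    (∀ r : Fin n → Fin n → Polynomial ℂ, IsGenSeq (interpSet z α) r →
      (∀ i j : Fin n, i ≠ j → ∀ a b : ℕ,
        vheight n (r i) = (a : WithBot ℕ) → vheight n (r j) = (b : WithBot ℕ) →
          a % n ≠ b % n) ∧
      (∀ s ∈ interpSet z α,
        ∃! c : Fin n → Polynomial ℂ, s = fun jj => ∑ i, c i * r i jj)) :=
  stmt7_general n N hn z α
end

section
/- For every j ∈ {1,…,n} and every k ∈ {1,…,N} one has ∑_{i=1}^n α_i(x_k) Q^{(i)}_j(x_k) = 0; that is, each vector polynomial q_j belongs to the interpolation set 𝕊({σ_k}_{k=1}^N, {x_k}_{k=1}^N) consisting of all n-dimensional vector polynomials r = (R_1,…,R_n)ᵗ with ∑_{i=1}^n α_i(x_k) R_i(x_k) = 0 for all k = 1,…,N. -/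
open Polynomial Matrix

/-- Each q_j belongs to the interpolation set 𝕊({σ_k},{x_k}). -/
theorem stmt9
    (n N : ℕ) (hn : 0 < n) (hnN : n < N)
    (A : Matrix (Fin N) (Fin N) ℝ) (m : ℕ → ℕ)
    (hA : MatrixClassM n N A m)
    (T : Matrix (Fin n) (Fin n) ℝ)
    (hT_upper : ∀ i j : Fin n, j < i → T i j = 0)
    (hT_diag : ∀ j : Fin n, T j j ≠ 0)
    (φ : Fin n → Fin N → Polynomial ℂ)
    (hφ_init : ∀ (j : Fin n) (i : Fin n),
      φ j (Fin.castLE (le_of_lt hnN) i) = C ((T j i : ℂ)))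
    (hφ_rec : ∀ (j : Fin n) (k : Fin N),
      (∀ i, 1 ≤ i → i ≤ n → m i ≠ (k : ℕ) + 1) →
      ∑ l, C ((A k l : ℂ)) * φ j l = X * φ j k)
    (Q : Fin n → Fin n → Polynomial ℂ)
    (hQ : ∀ (j i : Fin n) (k : Fin N), (k : ℕ) + 1 = m ((i : ℕ) + 1) →
      Q j i = X * φ j k - ∑ l, C ((A k l : ℂ)) * φ j l)
    (x : Fin N → ℝ) (v : Fin N → Fin N → ℂ)
    (heig : ∀ k, (A.map (fun a => (a : ℂ))).mulVec (v k) = (x k : ℂ) • v k)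
    (horm : ∀ k l : Fin N,
      ∑ i, (starRingEnd ℂ) (v k i) * v l i = if k = l then 1 else 0)
    (αc : Fin N → Fin n → ℂ)
    (hαc : ∀ (k : Fin N) (i : Fin N),
      v k i = ∑ j, αc k j * (φ j i).eval ((x k : ℂ)))
    :
    ∀ (j : Fin n) (k : Fin N),
      ∑ i : Fin n, αc k i * (Q i j).eval ((x k : ℂ)) = 0 := by
  intro j k
  have hj1 : (j : ℕ) + 1 ≤ n := j.2
  have hmono := hA.m_mono (j : ℕ) j.2
  have hle := hA.m_le ((j : ℕ) + 1) (by omega) hj1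
  have hm_lt : m ((j : ℕ) + 1) - 1 < N := by omega
  set k' : Fin N := ⟨m ((j : ℕ) + 1) - 1, hm_lt⟩ with hk'def
  have hk' : (k' : ℕ) + 1 = m ((j : ℕ) + 1) := by simp [hk'def]; omega
  have heigk := congrFun (heig k) k'
  simp only [Matrix.mulVec, dotProduct, Matrix.map_apply, Pi.smul_apply,
    smul_eq_mul] at heigk
  calc ∑ i : Fin n, αc k i * (Q i j).eval ((x k : ℂ))
      = ∑ i : Fin n, αc k i * (((x k : ℂ)) * (φ i k').eval ((x k : ℂ))
          - ∑ l, ((A k' l : ℂ)) * (φ i l).eval ((x k : ℂ))) := by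
        refine Finset.sum_congr rfl fun i _ => ?_
        rw [hQ i j k' hk']
        simp [eval_finset_sum]
    _ = (x k : ℂ) * (∑ i : Fin n, αc k i * (φ i k').eval ((x k : ℂ)))
          - ∑ l, ((A k' l : ℂ)) * (∑ i : Fin n, αc k i * (φ i l).eval ((x k : ℂ))) := by
        simp only [mul_sub]
        rw [Finset.sum_sub_distrib]
        congr 1
        · rw [Finset.mul_sum]
          exact Finset.sum_congr rfl fun i _ => by ring
        · simp only [Finset.mul_sum]
          rw [Finset.sum_comm]
          exact Finset.sum_congr rfl fun l _ => Finset.sum_congr rfl fun i _ => by ring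
    _ = (x k : ℂ) * v k k' - ∑ l, ((A k' l : ℂ)) * v k l := by
        rw [← hαc k k']
        congr 1
        exact Finset.sum_congr rfl fun l _ => by rw [← hαc k l]
    _ = 0 := by rw [← heigk]; ring
end

section
/- For every j ∈ {1,…,n}, the vector polynomial q_j is in the equivalence class of zero in L²(ℝ,σ): one has ⟨q_j, q_j⟩_{L²(σ)} = 0, and moreover ⟨r, q_j⟩_{L²(σ)} = 0 for every n-dimensional vector polynomial r. -/
open Polynomial Matrix

/-- Each q_j is in the equivalence class of zero in L²(ℝ,σ). -/
theorem stmt10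
    (n N : ℕ) (hn : 0 < n) (hnN : n < N)
    (A : Matrix (Fin N) (Fin N) ℝ) (m : ℕ → ℕ)
    (hA : MatrixClassM n N A m)
    (T : Matrix (Fin n) (Fin n) ℝ)
    (hT_upper : ∀ i j : Fin n, j < i → T i j = 0)
    (hT_diag : ∀ j : Fin n, T j j ≠ 0)
    (φ : Fin n → Fin N → Polynomial ℂ)
    (hφ_init : ∀ (j : Fin n) (i : Fin n),
      φ j (Fin.castLE (le_of_lt hnN) i) = C ((T j i : ℂ)))
    (hφ_rec : ∀ (j : Fin n) (k : Fin N),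
      (∀ i, 1 ≤ i → i ≤ n → m i ≠ (k : ℕ) + 1) →
      ∑ l, C ((A k l : ℂ)) * φ j l = X * φ j k)
    (Q : Fin n → Fin n → Polynomial ℂ)
    (hQ : ∀ (j i : Fin n) (k : Fin N), (k : ℕ) + 1 = m ((i : ℕ) + 1) →
      Q j i = X * φ j k - ∑ l, C ((A k l : ℂ)) * φ j l)
    (x : Fin N → ℝ) (v : Fin N → Fin N → ℂ)
    (heig : ∀ k, (A.map (fun a => (a : ℂ))).mulVec (v k) = (x k : ℂ) • v k)
    (horm : ∀ k l : Fin N,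
      ∑ i, (starRingEnd ℂ) (v k i) * v l i = if k = l then 1 else 0)
    (αc : Fin N → Fin n → ℂ)
    (hαc : ∀ (k : Fin N) (i : Fin N),
      v k i = ∑ j, αc k j * (φ j i).eval ((x k : ℂ)))
    :
    ∀ j : Fin n,
      L2inner x (sigmaJump αc) (fun i => Q i j) (fun i => Q i j) = 0 ∧
      ∀ r : Fin n → Polynomial ℂ,
        L2inner x (sigmaJump αc) r (fun i => Q i j) = 0 := by
  intro j
  have hjn : (j : ℕ) < n := j.isLt
  have hj1n : (j : ℕ) + 1 ≤ n := hjn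
  have hmono : ∀ b, b ≤ n → ∀ a, a ≤ b → m a ≤ m b := by
    intro b
    induction b with
    | zero => intro _ a ha; rw [Nat.le_zero.mp ha]
    | succ b ih =>
      intro hb a ha
      rcases Nat.lt_succ_iff_lt_or_eq.mp (Nat.lt_succ_of_le ha) with h | h
      · exact le_trans (ih (by omega) a (by omega))
          (le_of_lt (hA.m_mono b (by omega)))
      · exact h ▸ le_rfl
  have hMpos : 0 < m ((j : ℕ) + 1) := by
    have h1 : m 0 ≤ m (j : ℕ) := hmono (j : ℕ) (by omega) 0 (Nat.zero_le _)
    have h2 : m (j : ℕ) < m ((j : ℕ) + 1) := hA.m_mono (j : ℕ) hjn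
    have := hA.m_zero
    omega
  have hMN : m ((j : ℕ) + 1) ≤ N := by
    have := hmono n le_rfl ((j : ℕ) + 1) hj1n
    rw [hA.m_last] at this
    exact this
  set k' : Fin N := ⟨m ((j : ℕ) + 1) - 1, by omega⟩ with hk'def
  have hk' : (k' : ℕ) + 1 = m ((j : ℕ) + 1) := by
    simp only [hk'def]
    omega
  have hkey : ∀ k : Fin N,
      ∑ j' : Fin n, αc k j' * (Q j' j).eval ((x k : ℂ)) = 0 := by
    intro k
    have hQ' : ∀ j' : Fin n, (Q j' j).eval ((x k : ℂ)) =
        (x k : ℂ) * (φ j' k').eval ((x k : ℂ)) -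
          ∑ l, ((A k' l : ℂ)) * (φ j' l).eval ((x k : ℂ)) := by
      intro j'
      rw [hQ j' j k' hk']
      simp [eval_finset_sum]
    have heigk' := congrFun (heig k) k'
    simp only [Matrix.mulVec, dotProduct, Matrix.map_apply,
      Pi.smul_apply, smul_eq_mul] at heigk'
    have hstep : ∑ j' : Fin n, αc k j' * (Q j' j).eval ((x k : ℂ)) =
        (x k : ℂ) * (∑ j' : Fin n, αc k j' * (φ j' k').eval ((x k : ℂ))) -
          ∑ l, ((A k' l : ℂ)) *
            (∑ j' : Fin n, αc k j' * (φ j' l).eval ((x k : ℂ))) := by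
      simp only [hQ', mul_sub, Finset.sum_sub_distrib, Finset.mul_sum]
      congr 1
      · apply Finset.sum_congr rfl; intro j' _; ring
      · rw [Finset.sum_comm]
        apply Finset.sum_congr rfl; intro l _
        apply Finset.sum_congr rfl; intro j' _; ring
    rw [hstep]
    have hv : ∀ i : Fin N,
        (∑ j' : Fin n, αc k j' * (φ j' i).eval ((x k : ℂ))) = v k i := by
      intro i; exact (hαc k i).symm
    simp only [hv]
    rw [heigk']
    ring
  have main : ∀ r : Fin n → Polynomial ℂ,
      L2inner x (sigmaJump αc) r (fun i => Q i j) = 0 := by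
    intro r
    unfold L2inner sigmaJump
    apply Finset.sum_eq_zero; intro k _
    apply Finset.sum_eq_zero; intro i _
    have : (∑ jj : Fin n,
        (starRingEnd ℂ) ((r i).eval ((x k : ℂ))) *
          (Matrix.of fun i jj => (starRingEnd ℂ) (αc k i) * αc k jj) i jj *
          (Q jj j).eval ((x k : ℂ))) =
        ((starRingEnd ℂ) ((r i).eval ((x k : ℂ))) * (starRingEnd ℂ) (αc k i)) *
          ∑ jj : Fin n, αc k jj * (Q jj j).eval ((x k : ℂ)) := by
      rw [Finset.mul_sum]
      apply Finset.sum_congr rfl; intro jj _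
      simp [Matrix.of_apply]; ring
    rw [this, hkey k, mul_zero]
  exact ⟨main _, main⟩
end

section
/- (i) If k ∈ {1,…,N} satisfies m_j < k < m_{j+1} for some j ∈ {0,…,n−1} (with m_0 = 0), then h(p_{k+n−j}) = n + h(p_k). (ii) If there are no degenerations of the diagonals, i.e. m_j = N−n+j for all j ∈ {1,…,n}, then h(p_k) = k−1 for all k ∈ {1,…,N}. (iii) For every j ∈ {1,…,n}, h(q_j) = h(p_{m_j}) + n, and h(p_i) ≠ h(q_j) for all i ∈ {1,…,N} and j ∈ {1,…,n}. -/
open Polynomial Matrix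

/-!
Interleaving a vector polynomial `(R_1, …, R_n)` into the scalar polynomial
`R_1(X^n) + X R_2(X^n) + ⋯ + X^(n-1) R_n(X^n)` turns its height into an ordinary degree, and turns
the recurrence `(𝒜 - zI)φ = 0` in row `r` into `∑_l a_{rl} P_l = X^n P_r` for the interleaved `P_l`.
If row `r` lies strictly inside block `j` (`m_j < r < m_{j+1}`), its last nonzero entry is
`a_{r,r+n-j} > 0`, so `P_{r+n-j}` is `X^n P_r` divided by it, up to terms of lower degree, provided
every `P_l` with `l < r+n-j` has degree below `deg P_r + n`. Since `r ↦ r+n-j` is a monotone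
bijection from the nondegenerate rows onto `{n+1, …, N}`, an induction along `k` shows that these
bounds hold and that the heights of the `p_k` are strictly increasing; this gives (i) and (ii). In a
degenerate row `m_j` the entry `a_{m_j, m_j+n-j}` vanishes and the same estimate gives
`h(q_j) = h(p_{m_j}) + n`; this value is not a height of any `p_i`, because `p_i` with `i > n` has
height `h(p_r) + n` for a nondegenerate row `r`, and the heights are injective.
-/

theorem WithBot.nsmul_bot {n : ℕ} (hn : n ≠ 0) : n • (⊥ : WithBot ℕ) = ⊥ := by
  obtain ⟨k, rfl⟩ := Nat.exists_eq_succ_of_ne_zero hn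
  rw [succ_nsmul, WithBot.add_bot]

theorem WithBot.lt_add_natCast {x : WithBot ℕ} (hx : 0 ≤ x) {n : ℕ} (hn : 0 < n) :
    x < x + n := by
  lift x to ℕ using (by rintro rfl; simp at hx)
  rw [Nat.cast_withBot, ← WithBot.coe_add, WithBot.coe_lt_coe]
  omega

namespace Polynomial

variable {R : Type*}

section CommSemiring

variable [CommSemiring R] {n : ℕ}

noncomputable def interleave (n : ℕ) (r : Fin n → R[X]) : R[X] :=
  ∑ j : Fin n, X ^ (j : ℕ) * expand R n (r j)

theorem degree_expand (hn : 0 < n) (p : R[X]) : (expand R n p).degree = n • p.degree := by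
  rcases eq_or_ne p 0 with rfl | hp
  · rw [map_zero, degree_zero, WithBot.nsmul_bot hn.ne']
  · rw [degree_eq_natDegree hp, degree_eq_natDegree ((expand_ne_zero hn).2 hp), natDegree_expand,
      nsmul_eq_mul]
    push_cast
    ring

theorem degree_X_pow_mul_expand [Nontrivial R] (hn : 0 < n) (j : ℕ) (p : R[X]) :
    (X ^ j * expand R n p).degree = n • p.degree + j := by
  rw [mul_comm, degree_mul_X_pow, degree_expand hn]

theorem degree_interleave [Nontrivial R] (r : Fin n → R[X]) :
    (interleave n r).degree = Finset.univ.sup fun j : Fin n => n • (r j).degree + (j : ℕ) := by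
  have hterm (j : Fin n) : (X ^ (j : ℕ) * expand R n (r j)).degree = n • (r j).degree + (j : ℕ) :=
    degree_X_pow_mul_expand j.pos _ _
  rw [interleave, degree_sum_eq_of_disjoint]
  · simp only [hterm]
  · rintro i ⟨-, hi⟩ j ⟨-, hj⟩ hij heq
    have hri : r i ≠ 0 := fun h => hi (by simp [h])
    have hrj : r j ≠ 0 := fun h => hj (by simp [h])
    simp only [Function.comp_apply, hterm, degree_eq_natDegree hri, degree_eq_natDegree hrj,
      nsmul_eq_mul] at heq
    have h : n * (r i).natDegree + i = n * (r j).natDegree + j := by exact_mod_cast heq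
    have := congrArg (· % n) h
    simp only [Nat.mul_add_mod, Nat.mod_eq_of_lt i.isLt, Nat.mod_eq_of_lt j.isLt] at this
    exact hij (Fin.ext this)

theorem interleave_X_mul (r : Fin n → R[X]) :
    interleave n (fun j => X * r j) = X ^ n * interleave n r := by
  simp only [interleave, map_mul, expand_X, Finset.mul_sum]
  exact Finset.sum_congr rfl fun _ _ => by ring

theorem interleave_sum_C_mul {ι : Type*} (s : Finset ι) (c : ι → R) (F : ι → Fin n → R[X]) :
    interleave n (fun j => ∑ l ∈ s, C (c l) * F l j) = ∑ l ∈ s, C (c l) * interleave n (F l) := by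
  simp only [interleave, map_sum, map_mul, expand_C, Finset.mul_sum]
  rw [Finset.sum_comm]
  exact Finset.sum_congr rfl fun _ _ => Finset.sum_congr rfl fun _ _ => by ring

theorem degree_sum_C_mul_lt {ι : Type*} {s : Finset ι} {c : ι → R} {F : ι → R[X]}
    {b : WithBot ℕ} (hb : ⊥ < b) (h : ∀ l ∈ s, c l ≠ 0 → (F l).degree < b) :
    (∑ l ∈ s, C (c l) * F l).degree < b := by
  refine (degree_sum_le _ _).trans_lt ((Finset.sup_lt_iff hb).2 fun l hl => ?_)
  by_cases hc : c l = 0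
  · simpa [hc] using hb
  · rw [C_mul']
    exact (degree_smul_le _ _).trans_lt (h l hl hc)

end CommSemiring

theorem interleave_sub [CommRing R] {n : ℕ} (r s : Fin n → R[X]) :
    interleave n (r - s) = interleave n r - interleave n s := by
  simp only [interleave, Pi.sub_apply, map_sub, mul_sub, Finset.sum_sub_distrib]

theorem degree_X_pow_mul_sub_of_degree_lt [Ring R] [Nontrivial R] {G S : R[X]} {n : ℕ}
    (h : S.degree < G.degree + n) : (X ^ n * G - S).degree = G.degree + n := by
  have hG : (X ^ n * G).degree = G.degree + n := by
    rw [(commute_X_pow G n).eq, degree_mul_X_pow]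
  rw [degree_sub_eq_left_of_degree_lt (hG ▸ h), hG]

end Polynomial

theorem vheight_eq_degree_interleave {n : ℕ} (r : Fin n → ℂ[X]) :
    vheight n r = (interleave n r).degree :=
  (degree_interleave r).symm

theorem vheight_C_of_upper {n : ℕ} {c : Fin n → ℂ} {i : Fin n} (hc : ∀ j, i < j → c j = 0)
    (hi : c i ≠ 0) : vheight n (fun j => C (c j)) = (i : ℕ) := by
  refine le_antisymm (Finset.sup_le fun j _ => ?_) ?_
  · dsimp only
    rcases le_or_gt j i with hji | hij
    · refine (add_le_add_left (nsmul_le_nsmul_right degree_C_le n) _).trans ?_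
      rw [smul_zero, zero_add]
      exact_mod_cast hji
    · rw [hc j hij, C_0, degree_zero, WithBot.nsmul_bot j.pos.ne', WithBot.bot_add]
      exact bot_le
  · refine le_trans ?_ (Finset.le_sup (Finset.mem_univ i))
    rw [degree_C hi, smul_zero, zero_add]

theorem exists_le_lt_succ (a : ℕ → ℕ) {x n : ℕ} (h0 : a 0 ≤ x) (hn : x < a n) :
    ∃ j < n, a j ≤ x ∧ x < a (j + 1) := by
  induction n with
  | zero => omega
  | succ n ih =>
    by_cases h : x < a n
    · obtain ⟨j, hj, hjx⟩ := ih h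
      exact ⟨j, by omega, hjx⟩
    · exact ⟨n, by omega, by omega, hn⟩

structure DegenerationIndices (n N : ℕ) (m : ℕ → ℕ) : Prop where
  zero : m 0 = 0
  last : m n = N
  lt_succ : ∀ j < n, m j < m (j + 1)

theorem MatrixClassM.degenerationIndices {n N : ℕ} {A : Matrix (Fin N) (Fin N) ℝ} {m : ℕ → ℕ}
    (hA : MatrixClassM n N A m) : DegenerationIndices n N m :=
  ⟨hA.m_zero, hA.m_last, hA.m_mono⟩

namespace DegenerationIndices

variable {n N : ℕ} {m : ℕ → ℕ}

theorem add_sub_le (hm : DegenerationIndices n N m) {a b : ℕ} (hab : a ≤ b) (hb : b ≤ n) :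
    m a + (b - a) ≤ m b := by
  induction b, hab using Nat.le_induction with
  | base => simp
  | succ b hab ih =>
    have := hm.lt_succ b (by omega)
    have := ih (by omega)
    omega

theorem apply_le_apply (hm : DegenerationIndices n N m) {a b : ℕ} (hab : a ≤ b) (hb : b ≤ n) :
    m a ≤ m b :=
  (Nat.le_add_right _ _).trans (hm.add_sub_le hab hb)

theorem lt_of_apply_lt (hm : DegenerationIndices n N m) {a b : ℕ} (ha : a ≤ n) (h : m a < m b) :
    a < b := by
  by_contra! hba
  exact (hm.apply_le_apply hba ha).not_gt h

theorem exists_nondegenerate_row (hm : DegenerationIndices n N m) {K : ℕ} (hnK : n ≤ K)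
    (hKN : K < N) : ∃ r j, j < n ∧ m j < r + 1 ∧ r + 1 < m (j + 1) ∧ K + j = r + n := by
  obtain ⟨j, hj, hjK, hKj⟩ := exists_le_lt_succ (fun j => m j + n - j) (x := K) (n := n)
    (by simp only [hm.zero]; omega) (by simp only [hm.last]; omega)
  exact ⟨K + j - n, j, hj, by omega, by omega, by omega⟩

/-- Row `k` of block `j` is coupled to row `k + n - j`; this coupling is monotone in `k`. -/
theorem add_le_add_of_le (hm : DegenerationIndices n N m) {j j' k k' : ℕ} (hj' : j' ≤ n)
    (hk : k + 1 ≤ m (j + 1)) (hk' : m j' < k' + 1) (hkk' : k ≤ k') : k + j' ≤ k' + j := by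
  rcases le_or_gt j' j with h | h
  · omega
  · have := hm.add_sub_le (a := j + 1) h hj'
    omega

theorem ne_of_nondegenerate (hm : DegenerationIndices n N m) {j r : ℕ} (hj : j < n)
    (hr : m j < r + 1) (hr' : r + 1 < m (j + 1)) {i : ℕ} (hi : i ≤ n) : m i ≠ r + 1 := by
  rcases le_or_gt i j with hij | hij
  · have := hm.apply_le_apply hij (by omega)
    omega
  · have := hm.apply_le_apply (a := j + 1) hij hi
    omega

theorem exists_row_eq (hm : DegenerationIndices n N m) {j : ℕ} (hj : j < n) :
    ∃ k : Fin N, (k : ℕ) + 1 = m (j + 1) := by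
  have h0 := hm.lt_succ 0 (by omega)
  have h1 := hm.apply_le_apply (a := 1) (b := j + 1) (by omega) (by omega)
  have hN := hm.apply_le_apply (a := j + 1) (b := n) (by omega) le_rfl
  rw [hm.zero, zero_add] at h0
  rw [hm.last] at hN
  exact ⟨⟨m (j + 1) - 1, by omega⟩, by simp only; omega⟩

end DegenerationIndices

/-- `d k` plays the role of `h(p_{k+1})` (rows are indexed from `0`); `step` is what the recurrence
in a nondegenerate row `r` of block `j` yields. -/
structure HeightRecursion (n N : ℕ) (m : ℕ → ℕ) (d : Fin N → WithBot ℕ) : Prop where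
  init : ∀ k : Fin N, (k : ℕ) < n → d k = (k : ℕ)
  step : ∀ (r k : Fin N) (j : ℕ), j < n → m j < r + 1 → r + 1 < m (j + 1) →
    (k : ℕ) + j = r + n → (∀ l : Fin N, l < k → d l < d r + n) → d k = d r + n

namespace HeightRecursion

variable {n N : ℕ} {m : ℕ → ℕ} {d : Fin N → WithBot ℕ}

theorem nonneg_of_lt (hd : HeightRecursion n N m d) (hn : 0 < n) {K : ℕ}
    (hmono : ∀ l l' : Fin N, l < l' → (l' : ℕ) < K → d l < d l') {r : Fin N} (hrK : (r : ℕ) < K) :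
    0 ≤ d r := by
  have h0 : d ⟨0, by omega⟩ = 0 := by rw [hd.init _ hn]; rfl
  rcases Nat.eq_zero_or_pos r with hr | hr
  · rw [show r = ⟨0, by omega⟩ from Fin.ext hr, h0]
  · exact h0 ▸ (hmono ⟨0, by omega⟩ r hr hrK).le

theorem lt_add_of_forall_lt (hd : HeightRecursion n N m d) (hm : DegenerationIndices n N m) {K : ℕ}
    (hmono : ∀ l l' : Fin N, l < l' → (l' : ℕ) < K → d l < d l')
    (hshift : ∀ l : Fin N, n ≤ (l : ℕ) → (l : ℕ) < K → ∃ (r : Fin N) (j : ℕ), j < n ∧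
      m j < r + 1 ∧ r + 1 < m (j + 1) ∧ (l : ℕ) + j = r + n ∧ d l = d r + n)
    {r : Fin N} {j : ℕ} (hj : j < n) (hr' : r + 1 ≤ m (j + 1)) (hrK : (r : ℕ) < K)
    {l : Fin N} (hlK : (l : ℕ) < K) (hl : l + j < r + n) : d l < d r + n := by
  rcases le_or_gt l r with hlr | hrl
  · have hr0 := hd.nonneg_of_lt (by omega) hmono hrK
    refine lt_of_le_of_lt ?_ (WithBot.lt_add_natCast hr0 (by omega))
    rcases hlr.lt_or_eq with hlr | rfl
    · exact (hmono l r hlr hrK).le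
    · exact le_rfl
  rcases lt_or_ge (l : ℕ) n with hln | hnl
  · rw [hd.init l hln, hd.init r (by omega)]
    exact_mod_cast (by omega : (l : ℕ) < r + n)
  · obtain ⟨r', j', hj', hr'', -, hlr', hdl⟩ := hshift l hnl hlK
    have hr'r : r' < r := by
      by_contra! h
      have := hm.add_le_add_of_le hj'.le hr' hr'' h
      omega
    rw [hdl]
    exact WithBot.add_lt_add_right (by simp) (hmono r' r hr'r hrK)

theorem strictMono_and_exists_shift (hd : HeightRecursion n N m d)
    (hm : DegenerationIndices n N m) :
    StrictMono d ∧ ∀ l : Fin N, n ≤ (l : ℕ) → ∃ (r : Fin N) (j : ℕ), j < n ∧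
      m j < r + 1 ∧ r + 1 < m (j + 1) ∧ (l : ℕ) + j = r + n ∧ d l = d r + n := by
  have key : ∀ k : Fin N, (∀ l < k, d l < d k) ∧ (n ≤ (k : ℕ) → ∃ (r : Fin N) (j : ℕ), j < n ∧
      m j < r + 1 ∧ r + 1 < m (j + 1) ∧ (k : ℕ) + j = r + n ∧ d k = d r + n) := by
    intro k
    induction k using WellFoundedLT.induction with
    | _ k ih =>
    rcases lt_or_ge (k : ℕ) n with hkn | hnk
    · refine ⟨fun l hl => ?_, fun h => absurd h (by omega)⟩
      rw [hd.init k hkn, hd.init l (by omega)]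
      exact_mod_cast hl
    · obtain ⟨r, j, hj, hr, hr', hkr⟩ := hm.exists_nondegenerate_row hnk k.isLt
      have hwin (l : Fin N) (hl : l < k) : d l < d ⟨r, by omega⟩ + n :=
        hd.lt_add_of_forall_lt hm (K := k) (fun l l' hll' hl' => (ih l' hl').1 l hll')
          (fun l hnl hl => (ih l hl).2 hnl) hj hr'.le (by simp only; omega) hl
          (by simp only; omega)
      have hk := hd.step ⟨r, by omega⟩ k j hj hr hr' hkr hwin
      exact ⟨fun l hl => hk ▸ hwin l hl, fun _ => ⟨_, j, hj, hr, hr', hkr, hk⟩⟩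
  exact ⟨fun a b h => (key b).1 a h, fun l => (key l).2⟩

theorem lt_add (hd : HeightRecursion n N m d) (hm : DegenerationIndices n N m) {r : Fin N}
    {j : ℕ} (hj : j < n) (hr' : r + 1 ≤ m (j + 1)) {l : Fin N} (hl : l + j < r + n) :
    d l < d r + n :=
  have ⟨hmono, hshift⟩ := hd.strictMono_and_exists_shift hm
  hd.lt_add_of_forall_lt hm (K := N) (fun _ _ h _ => hmono h) (fun l hl _ => hshift l hl) hj hr'
    r.isLt l.isLt hl

theorem nonneg (hd : HeightRecursion n N m d) (hm : DegenerationIndices n N m) (hn : 0 < n)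
    (k : Fin N) : 0 ≤ d k :=
  hd.nonneg_of_lt hn (K := N) (fun _ _ h _ => (hd.strictMono_and_exists_shift hm).1 h) k.isLt

theorem eq_add_of_nondegenerate (hd : HeightRecursion n N m d) (hm : DegenerationIndices n N m)
    {r k : Fin N} {j : ℕ} (hj : j < n) (hr : m j < r + 1) (hr' : r + 1 < m (j + 1))
    (hk : (k : ℕ) + j = r + n) : d k = d r + n :=
  hd.step r k j hj hr hr' hk fun l hl => hd.lt_add hm hj hr'.le (by omega)

theorem eq_of_no_degeneration (hd : HeightRecursion n N m d) (hm : DegenerationIndices n N m)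
    (hn : 0 < n) (hnd : ∀ j, 1 ≤ j → j ≤ n → m j = N - n + j) (k : Fin N) : d k = (k : ℕ) := by
  induction k using WellFoundedLT.induction with
  | _ k ih =>
  rcases lt_or_ge (k : ℕ) n with hkn | hnk
  · exact hd.init k hkn
  · have hr : (k : ℕ) - n < N := by omega
    have hm1 := hnd 1 le_rfl hn
    rw [hd.eq_add_of_nondegenerate hm (r := ⟨k - n, hr⟩) (j := 0) hn
        (by simp only [hm.zero]; omega) (by simp only [zero_add, hm1]; omega)
        (by simp only; omega),
      ih ⟨k - n, hr⟩ (by simp only [Fin.lt_def]; omega)]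
    exact_mod_cast (by omega : (k : ℕ) - n + n = k)

theorem ne_add_of_degenerate (hd : HeightRecursion n N m d) (hm : DegenerationIndices n N m)
    {k : Fin N} {j : ℕ} (hj : j < n) (hk : (k : ℕ) + 1 = m (j + 1)) (i : Fin N) :
    d i ≠ d k + n := by
  obtain ⟨hmono, hshift⟩ := hd.strictMono_and_exists_shift hm
  rcases lt_or_ge (i : ℕ) n with hin | hni
  · have hk0 := hd.nonneg hm (by omega) k
    lift d k to ℕ using (by rintro h; simp [h] at hk0) with a
    rw [hd.init i hin, Nat.cast_withBot, Nat.cast_withBot, ← WithBot.coe_add, Ne,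
      WithBot.coe_inj]
    omega
  · obtain ⟨r, j', hj', hr, hr', -, hir⟩ := hshift i hni
    rw [hir]
    intro h
    obtain rfl : r = k := hmono.injective (WithBot.add_right_cancel (by simp) h)
    have h1 := hm.lt_of_apply_lt (a := j') (b := j + 1) hj'.le (by omega)
    have h2 := hm.lt_of_apply_lt (a := j + 1) (b := j' + 1) (by omega) (by omega)
    omega

end HeightRecursion

section BandMatrix

variable {n N : ℕ} {A : Matrix (Fin N) (Fin N) ℝ} {m : ℕ → ℕ}

theorem MatrixClassM.apply_eq_zero (hA : MatrixClassM n N A m) {j : ℕ} (hj : j ≤ n)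
    {r l : Fin N} (hmj : m j ≤ r + 1) (hl : r + n < l + j) : A r l = 0 := by
  by_cases hband : (r : ℕ) + n < l
  · exact hA.band r l (by rw [abs_sub_comm, abs_of_nonneg (by omega)]; omega)
  · rw [← hA.symm.apply r l]
    refine hA.d_zero (r + n - l) (by omega) r l (by omega) ?_ (by omega)
    exact (hA.degenerationIndices.apply_le_apply (by omega) hj).trans hmj

theorem MatrixClassM.heightRecursion (hA : MatrixClassM n N A m) (hnN : n < N)
    (T : Matrix (Fin n) (Fin n) ℝ)
    (hT_upper : ∀ i j : Fin n, j < i → T i j = 0) (hT_diag : ∀ j : Fin n, T j j ≠ 0)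
    (φ : Fin n → Fin N → ℂ[X])
    (hφ_init : ∀ (j : Fin n) (i : Fin n), φ j (Fin.castLE (le_of_lt hnN) i) = C ((T j i : ℂ)))
    (hφ_rec : ∀ (j : Fin n) (k : Fin N), (∀ i, 1 ≤ i → i ≤ n → m i ≠ (k : ℕ) + 1) →
      ∑ l, C ((A k l : ℂ)) * φ j l = X * φ j k) :
    HeightRecursion n N m fun k => vheight n fun j => φ j k := by
  refine ⟨fun k hk => ?_, fun r k j hj hr hr' hkr hwin => ?_⟩
  · have hφk : (fun j => φ j k) = fun j => C ((T j ⟨k, hk⟩ : ℂ)) :=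
      funext fun j => hφ_init j ⟨k, hk⟩
    rw [hφk]
    exact vheight_C_of_upper (i := ⟨k, hk⟩) (fun j hj => by simp [hT_upper j _ hj])
      (Complex.ofReal_ne_zero.2 (hT_diag _))
  · simp only [vheight_eq_degree_interleave] at hwin ⊢
    set F : Fin N → ℂ[X] := fun l => interleave n fun j => φ j l
    have hrec : ∑ l, C ((A r l : ℂ)) * F l = X ^ n * F r := by
      have := congrArg (interleave n) (funext fun j =>
        hφ_rec j r fun i _ hi => hA.degenerationIndices.ne_of_nondegenerate hj hr hr' hi)
      rwa [interleave_sum_C_mul, interleave_X_mul] at this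
    rw [← Finset.add_sum_erase _ _ (Finset.mem_univ k)] at hrec
    have hArk : (A r k : ℂ) ≠ 0 := by
      rw [← hA.symm.apply r k]
      exact_mod_cast (hA.d_pos j hj r k (by omega) hr hr').ne'
    rw [← degree_C_mul hArk, eq_sub_of_add_eq hrec]
    refine degree_X_pow_mul_sub_of_degree_lt (degree_sum_C_mul_lt ?_ fun l hl hAl => hwin l ?_)
    · exact bot_le.trans_lt (hwin r (by simp only [Fin.lt_def]; omega))
    · have : ¬ (r : ℕ) + n < l + j := fun h =>
        hAl (by exact_mod_cast hA.apply_eq_zero hj.le hr.le h)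
      exact lt_of_le_of_ne (by simp only [Fin.le_def]; omega) (Finset.ne_of_mem_erase hl)

theorem MatrixClassM.vheight_eq_add_of_degenerate (hA : MatrixClassM n N A m) (hn : 0 < n)
    {φ : Fin n → Fin N → ℂ[X]} (hd : HeightRecursion n N m fun k => vheight n fun j => φ j k)
    {Q : Fin n → ℂ[X]} {k : Fin N} {jq : ℕ} (hjq : jq < n) (hk : (k : ℕ) + 1 = m (jq + 1))
    (hQ : ∀ j, Q j = X * φ j k - ∑ l, C ((A k l : ℂ)) * φ j l) :
    vheight n Q = vheight n (fun j => φ j k) + n := by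
  have hm := hA.degenerationIndices
  have hlt (l : Fin N) (hAl : A k l ≠ 0) :
      vheight n (fun j => φ j l) < vheight n (fun j => φ j k) + n :=
    hd.lt_add hm hjq hk.le (not_lt.1 fun h => hAl (hA.apply_eq_zero hjq hk.ge (by omega)))
  have hbot : ⊥ < vheight n (fun j => φ j k) + n :=
    bot_le.trans_lt (WithBot.lt_add_natCast (hd.nonneg hm hn k) hn)
  simp only [vheight_eq_degree_interleave] at hlt hbot ⊢
  have hQ' : interleave n Q = X ^ n * interleave n (fun j => φ j k) -
      ∑ l, C ((A k l : ℂ)) * interleave n (fun j => φ j l) := by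
    rw [show Q = (fun j => X * φ j k) - fun j => ∑ l, C ((A k l : ℂ)) * φ j l from funext hQ,
      interleave_sub, interleave_X_mul, interleave_sum_C_mul]
  rw [hQ']
  exact degree_X_pow_mul_sub_of_degree_lt
    (degree_sum_C_mul_lt hbot fun l _ hAl => hlt l (by exact_mod_cast hAl))

end BandMatrix

/-- Heights of the vector polynomials p_k and q_j. -/
theorem stmt11
    (n N : ℕ) (hn : 0 < n) (hnN : n < N)
    (A : Matrix (Fin N) (Fin N) ℝ) (m : ℕ → ℕ)
    (hA : MatrixClassM n N A m)
    (T : Matrix (Fin n) (Fin n) ℝ)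
    (hT_upper : ∀ i j : Fin n, j < i → T i j = 0)
    (hT_diag : ∀ j : Fin n, T j j ≠ 0)
    (φ : Fin n → Fin N → Polynomial ℂ)
    (hφ_init : ∀ (j : Fin n) (i : Fin n),
      φ j (Fin.castLE (le_of_lt hnN) i) = C ((T j i : ℂ)))
    (hφ_rec : ∀ (j : Fin n) (k : Fin N),
      (∀ i, 1 ≤ i → i ≤ n → m i ≠ (k : ℕ) + 1) →
      ∑ l, C ((A k l : ℂ)) * φ j l = X * φ j k)
    (Q : Fin n → Fin n → Polynomial ℂ)
    (hQ : ∀ (j i : Fin n) (k : Fin N), (k : ℕ) + 1 = m ((i : ℕ) + 1) →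
      Q j i = X * φ j k - ∑ l, C ((A k l : ℂ)) * φ j l)
    :
    (∀ j : ℕ, j < n → ∀ k k' : Fin N, (k' : ℕ) = (k : ℕ) + (n - j) →
      m j < (k : ℕ) + 1 → (k : ℕ) + 1 < m (j + 1) →
      vheight n (fun jj => φ jj k')
        = ((n : ℕ) : WithBot ℕ) + vheight n (fun jj => φ jj k)) ∧
    ((∀ j, 1 ≤ j → j ≤ n → m j = N - n + j) →
      ∀ k : Fin N, vheight n (fun jj => φ jj k) = ((k : ℕ) : WithBot ℕ)) ∧
    (∀ (jq : Fin n) (k : Fin N), (k : ℕ) + 1 = m ((jq : ℕ) + 1) →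
      vheight n (fun jj => Q jj jq)
        = vheight n (fun jj => φ jj k) + ((n : ℕ) : WithBot ℕ)) ∧
    (∀ (i : Fin N) (jq : Fin n),
      vheight n (fun jj => φ jj i) ≠ vheight n (fun jj => Q jj jq)) := by
  have hm := hA.degenerationIndices
  have hd := hA.heightRecursion hnN T hT_upper hT_diag φ hφ_init hφ_rec
  have hq (jq : Fin n) (k : Fin N) (hk : (k : ℕ) + 1 = m ((jq : ℕ) + 1)) :
      vheight n (fun jj => Q jj jq) = vheight n (fun jj => φ jj k) + n :=
    hA.vheight_eq_add_of_degenerate hn hd jq.isLt hk fun j => hQ j jq k hk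
  refine ⟨fun j hj k k' hk' hk hk'' => ?_, hd.eq_of_no_degeneration hm hn, hq, fun i jq => ?_⟩
  · rw [add_comm]
    exact hd.eq_add_of_nondegenerate hm hj hk hk'' (by omega)
  · obtain ⟨k, hk⟩ := hm.exists_row_eq jq.isLt
    rw [hq jq k hk]
    exact hd.ne_add_of_degenerate hm jq.isLt hk i
end

section
/- Every n-dimensional vector polynomial r can be written as a finite linear combination r(z) = ∑_{k=1}^N c_k p_k(z) + ∑_{j=1}^n S_j(z) q_j(z), where the c_k are complex constants and the S_j are scalar polynomials. -/
open Polynomial Matrix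

/-- Auxiliary predicate: `s` is a combination of the `φ · k` with constant
coefficients and the `Q · j` with polynomial coefficients. -/
def GoodComb (n N : ℕ) (φ : Fin n → Fin N → Polynomial ℂ)
    (Q : Fin n → Fin n → Polynomial ℂ) (s : Fin n → Polynomial ℂ) : Prop :=
  ∃ (c : Fin N → ℂ) (S : Fin n → Polynomial ℂ),
    ∀ jj : Fin n,
      s jj = (∑ k, Polynomial.C (c k) * φ jj k) + ∑ j, S j * Q jj j

/-- Every vector polynomial is a combination of the p_k and S_j·q_j. -/
theorem stmt13
    (n N : ℕ) (hn : 0 < n) (hnN : n < N)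
    (A : Matrix (Fin N) (Fin N) ℝ) (m : ℕ → ℕ)
    (hA : MatrixClassM n N A m)
    (T : Matrix (Fin n) (Fin n) ℝ)
    (hT_upper : ∀ i j : Fin n, j < i → T i j = 0)
    (hT_diag : ∀ j : Fin n, T j j ≠ 0)
    (φ : Fin n → Fin N → Polynomial ℂ)
    (hφ_init : ∀ (j : Fin n) (i : Fin n),
      φ j (Fin.castLE (le_of_lt hnN) i) = C ((T j i : ℂ)))
    (hφ_rec : ∀ (j : Fin n) (k : Fin N),
      (∀ i, 1 ≤ i → i ≤ n → m i ≠ (k : ℕ) + 1) →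
      ∑ l, C ((A k l : ℂ)) * φ j l = X * φ j k)
    (Q : Fin n → Fin n → Polynomial ℂ)
    (hQ : ∀ (j i : Fin n) (k : Fin N), (k : ℕ) + 1 = m ((i : ℕ) + 1) →
      Q j i = X * φ j k - ∑ l, C ((A k l : ℂ)) * φ j l)
    :
    ∀ r : Fin n → Polynomial ℂ,
      ∃ (c : Fin N → ℂ) (S : Fin n → Polynomial ℂ),
        ∀ jj : Fin n,
          r jj = (∑ k, Polynomial.C (c k) * φ jj k) + ∑ j, S j * Q jj j := by
  intro r
  -- strict monotonicity of m on [0, n]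
  have hm_lt : ∀ a b : ℕ, b ≤ n → a < b → m a < m b := by
    intro a b
    induction b with
    | zero => omega
    | succ b ih =>
      intro hb hab
      have h1 : m b < m (b + 1) := hA.m_mono b (by omega)
      rcases Nat.lt_succ_iff_lt_or_eq.mp hab with h | h
      · exact lt_trans (ih (by omega) h) h1
      · subst h; exact h1
  have hm0 := hA.m_zero
  have hmlast := hA.m_last
  have hm1 : ∀ j : Fin n, 1 ≤ m ((j : ℕ) + 1) := by
    intro j
    have := hm_lt 0 ((j : ℕ) + 1) (by omega) (by omega)
    omega
  have hmN : ∀ j : Fin n, m ((j : ℕ) + 1) ≤ N := by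
    intro j
    have hle : m ((j : ℕ) + 1) ≤ m n := by
      rcases Nat.lt_or_ge ((j : ℕ) + 1) n with h | h
      · exact le_of_lt (hm_lt _ n le_rfl h)
      · have hjn : (j : ℕ) + 1 = n := by omega
        rw [hjn]
    omega
  set kOf : Fin n → Fin N := fun j =>
    ⟨m ((j : ℕ) + 1) - 1, by have h1 := hm1 j; have h2 := hmN j; omega⟩ with hkOf
  have hkOf_val : ∀ j : Fin n, (kOf j : ℕ) + 1 = m ((j : ℕ) + 1) := by
    intro j
    have h1 := hm1 j
    simp only [hkOf]
    omega
  have hkOf_inj : Function.Injective kOf := by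
    intro a b hab
    have ha := hkOf_val a
    have hb := hkOf_val b
    rw [hab] at ha
    by_contra hne
    have hne' : (a : ℕ) ≠ (b : ℕ) := fun h => hne (Fin.ext h)
    rcases Nat.lt_or_ge (a : ℕ) (b : ℕ) with h | h
    · have := hm_lt ((a : ℕ) + 1) ((b : ℕ) + 1) (by omega) (by omega); omega
    · have := hm_lt ((b : ℕ) + 1) ((a : ℕ) + 1) (by omega) (by omega); omega
  -- key recurrence for X * φ jj k
  have key : ∀ (jj : Fin n) (k : Fin N),
      X * φ jj k = (∑ l, C ((A k l : ℂ)) * φ jj l)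
        + ∑ j, (if kOf j = k then Q jj j else 0) := by
    intro jj k
    by_cases hk : ∃ j : Fin n, kOf j = k
    · obtain ⟨j0, hj0⟩ := hk
      have hsum : (∑ j, (if kOf j = k then Q jj j else 0)) = Q jj j0 := by
        rw [Finset.sum_eq_single j0]
        · simp [hj0]
        · intro b _ hb
          have : kOf b ≠ k := fun h => hb (hkOf_inj (h.trans hj0.symm))
          simp [this]
        · simp
      rw [hsum]
      have hq := hQ jj j0 k (by rw [← hj0]; exact hkOf_val j0)
      rw [hq]; ring
    · have hcond : ∀ i, 1 ≤ i → i ≤ n → m i ≠ (k : ℕ) + 1 := by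
        intro i h1 h2 hmi
        apply hk
        refine ⟨⟨i - 1, by omega⟩, ?_⟩
        have hi : i - 1 + 1 = i := by omega
        apply Fin.ext
        simp only [hkOf, Fin.val_mk, hi]
        omega
      have hrec := hφ_rec jj k hcond
      have hz : (∑ j, (if kOf j = k then Q jj j else 0)) = 0 := by
        apply Finset.sum_eq_zero
        intro j _
        have : kOf j ≠ k := fun h => hk ⟨j, h⟩
        simp [this]
      rw [hz, hrec, add_zero]
  -- closure properties of GoodComb
  have good_zero : GoodComb n N φ Q (fun _ => 0) := by
    refine ⟨0, 0, fun jj => ?_⟩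
    simp
  have good_add : ∀ f g, GoodComb n N φ Q f → GoodComb n N φ Q g →
      GoodComb n N φ Q (fun jj => f jj + g jj) := by
    rintro f g ⟨c1, S1, h1⟩ ⟨c2, S2, h2⟩
    refine ⟨fun k => c1 k + c2 k, fun j => S1 j + S2 j, fun jj => ?_⟩
    show f jj + g jj = _
    rw [h1 jj, h2 jj]
    simp only [_root_.map_add, add_mul, Finset.sum_add_distrib]
    ring
  have good_const : ∀ v : Fin n → ℂ, GoodComb n N φ Q (fun jj => C (v jj)) := by
    intro v
    set Tc : Matrix (Fin n) (Fin n) ℂ := Matrix.of (fun i j => ((T i j : ℝ) : ℂ)) with hTc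
    have hdet : Tc.det ≠ 0 := by
      have htri : Tc.BlockTriangular id := by
        intro i j hij
        simp only [hTc, Matrix.of_apply, hT_upper i j hij, Complex.ofReal_zero]
      rw [Matrix.det_of_upperTriangular htri]
      refine Finset.prod_ne_zero_iff.mpr fun i _ => ?_
      simp only [hTc, Matrix.of_apply, ne_eq, Complex.ofReal_eq_zero]
      exact hT_diag i
    set w : Fin n → ℂ := Tc⁻¹ *ᵥ v with hw
    have hTw : Tc *ᵥ w = v := by
      rw [hw, Matrix.mulVec_mulVec, Matrix.mul_nonsing_inv Tc (isUnit_iff_ne_zero.mpr hdet),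
        Matrix.one_mulVec]
    refine ⟨fun k => if h : (k : ℕ) < n then w ⟨k, h⟩ else 0, 0, fun jj => ?_⟩
    show C (v jj) = _
    simp only [Pi.zero_apply, zero_mul, Finset.sum_const_zero, add_zero]
    have hsub : (Finset.univ.map (Fin.castLEEmb hnN.le) : Finset (Fin N)) ⊆ Finset.univ :=
      Finset.subset_univ _
    rw [← Finset.sum_subset hsub (fun k _ hk => ?_)]
    · rw [Finset.sum_map]
      have hterm : ∀ i : Fin n,
          C (if h : ((Fin.castLEEmb hnN.le i : Fin N) : ℕ) < n
              then w ⟨((Fin.castLEEmb hnN.le i : Fin N) : ℕ), h⟩ else 0)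
            * φ jj (Fin.castLEEmb hnN.le i) = C (w i * (T jj i : ℂ)) := by
        intro i
        have hlt : ((Fin.castLEEmb hnN.le i : Fin N) : ℕ) < n := by
          simp [Fin.castLEEmb, Fin.castLE]
        rw [dif_pos hlt]
        have : (⟨((Fin.castLEEmb hnN.le i : Fin N) : ℕ), hlt⟩ : Fin n) = i := by
          apply Fin.ext; simp [Fin.castLEEmb, Fin.castLE]
        rw [this]
        have hφi : φ jj (Fin.castLEEmb hnN.le i) = C ((T jj i : ℂ)) := by
          have := hφ_init jj i
          simpa [Fin.castLEEmb] using this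
        rw [hφi, ← _root_.map_mul]
      rw [Finset.sum_congr rfl (fun i _ => hterm i), ← _root_.map_sum]
      congr 1
      have hvjj : v jj = ∑ i, ((T jj i : ℝ) : ℂ) * w i := by
        rw [← hTw]
        simp [Matrix.mulVec, dotProduct, hTc]
      rw [hvjj]
      exact Finset.sum_congr rfl fun i _ => by ring
    · have hk' : ¬ ((k : ℕ) < n) := by
        intro hlt
        apply hk
        simp only [Finset.mem_map, Finset.mem_univ, true_and]
        exact ⟨⟨(k : ℕ), hlt⟩, by apply Fin.ext; simp [Fin.castLEEmb, Fin.castLE]⟩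
      rw [dif_neg hk', _root_.map_zero, zero_mul]
  have good_X : ∀ s, GoodComb n N φ Q s → GoodComb n N φ Q (fun jj => X * s jj) := by
    rintro s ⟨c, S, hs⟩
    refine ⟨fun l => ∑ k, c k * (A k l : ℂ), fun j => C (c (kOf j)) + X * S j, fun jj => ?_⟩
    show X * s jj = _
    rw [hs jj, mul_add, Finset.mul_sum, Finset.mul_sum]
    have h1 : ∀ k : Fin N, X * (C (c k) * φ jj k) = C (c k) * (X * φ jj k) := by
      intro k; ring
    simp_rw [h1, key jj]
    have E1 : (∑ k, C (c k) * ∑ l, C ((A k l : ℂ)) * φ jj l)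
        = ∑ l, C (∑ k, c k * (A k l : ℂ)) * φ jj l := by
      simp_rw [Finset.mul_sum, ← mul_assoc, ← _root_.map_mul]
      rw [Finset.sum_comm]
      refine Finset.sum_congr rfl fun l _ => ?_
      rw [_root_.map_sum, Finset.sum_mul]
    have E2 : (∑ k, C (c k) * ∑ j, (if kOf j = k then Q jj j else 0))
        = ∑ j, C (c (kOf j)) * Q jj j := by
      simp_rw [Finset.mul_sum, mul_ite, mul_zero]
      rw [Finset.sum_comm]
      refine Finset.sum_congr rfl fun j _ => ?_
      rw [Finset.sum_ite_eq Finset.univ (kOf j) (fun k => C (c k) * Q jj j)]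
      simp
    simp_rw [mul_add]
    rw [Finset.sum_add_distrib, E1, E2]
    simp_rw [add_mul]
    rw [Finset.sum_add_distrib]
    have E3 : (∑ j, X * (S j * Q jj j)) = ∑ j, (X * S j) * Q jj j :=
      Finset.sum_congr rfl fun j _ => by ring
    rw [E3]
    ring
  have good_pmul : ∀ (p : Polynomial ℂ) s, GoodComb n N φ Q s →
      GoodComb n N φ Q (fun jj => p * s jj) := by
    intro p s hs
    induction p using Polynomial.induction_on with
    | C a =>
      obtain ⟨c, S, h⟩ := hs
      refine ⟨fun k => a * c k, fun j => C a * S j, fun jj => ?_⟩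
      show C a * s jj = _
      rw [h jj, mul_add, Finset.mul_sum, Finset.mul_sum]
      congr 1
      · exact Finset.sum_congr rfl fun k _ => by rw [_root_.map_mul, mul_assoc]
      · exact Finset.sum_congr rfl fun j _ => (mul_assoc _ _ _).symm
    | add p q hp hq =>
      have := good_add _ _ hp hq
      have heq : (fun jj => p * s jj + q * s jj) = fun jj => (p + q) * s jj := by
        funext jj; ring
      rwa [heq] at this
    | monomial nn a ih =>
      have := good_X _ ih
      have heq : (fun jj => X * ((C a * X ^ nn) * s jj))
          = fun jj => (C a * X ^ (nn + 1)) * s jj := by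
        funext jj; ring
      rwa [heq] at this
  have good_sum : ∀ (t : Finset (Fin n)) (f : Fin n → Fin n → Polynomial ℂ),
      (∀ i ∈ t, GoodComb n N φ Q (f i)) →
      GoodComb n N φ Q (fun jj => ∑ i ∈ t, f i jj) := by
    intro t
    induction t using Finset.induction_on with
    | empty =>
      intro f _
      simpa using good_zero
    | @insert x t hx ih =>
      intro f hf
      have h1 := hf x (Finset.mem_insert_self x t)
      have h2 := ih f fun i hi => hf i (Finset.mem_insert_of_mem hi)
      have := good_add _ _ h1 h2
      simpa [Finset.sum_insert hx] using this
  have good_e : ∀ i : Fin n,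
      GoodComb n N φ Q (fun jj => if i = jj then (1 : Polynomial ℂ) else 0) := by
    intro i
    have := good_const (fun jj => if i = jj then 1 else 0)
    convert this using 1
    funext jj
    split <;> simp
  have hr : GoodComb n N φ Q r := by
    have := good_sum Finset.univ
      (fun i jj => r i * (if i = jj then (1 : Polynomial ℂ) else 0))
      (fun i _ => good_pmul (r i) _ (good_e i))
    have heq : (fun jj => ∑ i, r i * (if i = jj then (1 : Polynomial ℂ) else 0)) = r := by
      funext jj
      simp only [mul_ite, mul_one, mul_zero]
      rw [Finset.sum_ite_eq' Finset.univ jj r]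
      simp
    rwa [heq] at this
  exact hr
end
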